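/- arXiv:1107.0371 — 7 statements merged into one kernel-verified Lean document; each statement's English description precedes it below -/
import Mathlib

section
/- Let A be a real m×d matrix, b ∈ ℝ^m, and v_1, …, v_n ∈ ℝ^d (n ≥ 1) be points such that conv{v_1,…,v_n} = {x ∈ ℝ^d : Ax ≤ b}. Suppose T is an entrywise nonnegative m×r real matrix and U is an entrywise nonnegative r×n real matrix such that for all i ∈ [m], j ∈ [n] one has b_i − A_i·v_j = (TU)_{ij}, where A_i denotes the i-th row of A. Then the image of the polyhedron Q := {(x,y) ∈ ℝ^d × ℝ^r : Ax + Ty = b, y ≥ 0} under the projection (x,y) ↦ x equals conv{v_1,…,v_n}. -/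
open Matrix

/-- A nonnegative factorization of the slack matrix of a polytope
`P = conv{v_1,…,v_n} = {x : Ax ≤ b}` yields an extension
`Q = {(x,y) : Ax + Ty = b, y ≥ 0}` whose projection `(x,y) ↦ x` is `P`. -/
theorem stmt0 {m d n r : ℕ} (hn : 1 ≤ n)
    (A : Matrix (Fin m) (Fin d) ℝ) (b : Fin m → ℝ)
    (v : Fin n → (Fin d → ℝ))
    (hP : convexHull ℝ (Set.range v) = {x : Fin d → ℝ | ∀ i, A.mulVec x i ≤ b i})
    (T : Matrix (Fin m) (Fin r) ℝ) (U : Matrix (Fin r) (Fin n) ℝ)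
    (hT : ∀ i ℓ, 0 ≤ T i ℓ) (hU : ∀ ℓ j, 0 ≤ U ℓ j)
    (hfac : ∀ i j, b i - A i ⬝ᵥ v j = (T * U) i j) :
    (fun p : (Fin d → ℝ) × (Fin r → ℝ) => p.1) ''
      {p : (Fin d → ℝ) × (Fin r → ℝ) |
        (∀ i, A.mulVec p.1 i + T.mulVec p.2 i = b i) ∧ ∀ ℓ, 0 ≤ p.2 ℓ}
    = convexHull ℝ (Set.range v) := by
  ext x
  constructor
  · rintro ⟨⟨x', y⟩, ⟨heq, hy⟩, rfl⟩
    rw [hP]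
    intro i
    have h0 : 0 ≤ T.mulVec y i := by
      simp only [mulVec, dotProduct]
      apply Finset.sum_nonneg
      intro ℓ _
      exact mul_nonneg (hT i ℓ) (hy ℓ)
    have := heq i
    linarith
  · intro hx
    rw [convexHull_range_eq_exists_affineCombination] at hx
    obtain ⟨s, w, hw0, hw1, hwx⟩ := hx
    have hxval : x = ∑ j ∈ s, w j • v j := by
      rw [← hwx, s.affineCombination_eq_linear_combination v w hw1]
    refine ⟨(x, fun ℓ => ∑ j ∈ s, w j * U ℓ j), ⟨?_, ?_⟩, rfl⟩
    · intro i
      have hAx : A.mulVec x i = ∑ j ∈ s, w j * (A i ⬝ᵥ v j) := by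
        subst hxval
        simp only [mulVec, dotProduct, Finset.sum_apply, Pi.smul_apply, smul_eq_mul,
          Finset.mul_sum, Finset.sum_mul]
        rw [Finset.sum_comm]
        congr 1; ext j; congr 1; ext k; ring
      have hTy : T.mulVec (fun ℓ => ∑ j ∈ s, w j * U ℓ j) i
          = ∑ j ∈ s, w j * (b i - A i ⬝ᵥ v j) := by
        simp only [mulVec, dotProduct, Finset.mul_sum]
        rw [Finset.sum_comm]
        refine Finset.sum_congr rfl fun j _ => ?_
        have hfac' : b i - ∑ k, A i k * v j k = ∑ ℓ, T i ℓ * U ℓ j := by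
          simpa [dotProduct, Matrix.mul_apply] using hfac i j
        simp only [dotProduct, hfac', Finset.mul_sum]
        refine Finset.sum_congr rfl fun ℓ _ => by ring
      rw [hAx, hTy, ← Finset.sum_add_distrib]
      have : ∑ j ∈ s, (w j * (A i ⬝ᵥ v j) + w j * (b i - A i ⬝ᵥ v j))
          = ∑ j ∈ s, w j * b i := Finset.sum_congr rfl fun j _ => by ring
      rw [this, ← Finset.sum_mul, hw1, one_mul]
    · intro ℓ
      exact Finset.sum_nonneg fun j hj => mul_nonneg (hw0 j hj) (hU ℓ j)
end

section
/- Let v_1, …, v_n ∈ ℝ^d (n ≥ 1), let C be a real m×d matrix and δ ∈ ℝ^m with conv{v_1,…,v_n} = {x ∈ ℝ^d : Cx ≤ δ}, and assume each inequality is tight, i.e., for every i ∈ [m], δ_i = max{C_i·x : x ∈ conv{v_1,…,v_n}}. Let A be a real k×e matrix, b ∈ ℝ^k, and π : ℝ^e → ℝ^d a linear map such that the image π(Q) of the polyhedron Q := {y ∈ ℝ^e : Ay ≤ b} equals conv{v_1,…,v_n}. Then there exist an entrywise nonnegative m×k real matrix T and an entrywise nonnegative k×n real matrix U such that for all i ∈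 [m], j ∈ [n], δ_i − C_i·v_j = (TU)_{ij}. -/
/-!
For every facet inequality `C i ⬝ᵥ x ≤ δ i`, the linear functional `y ↦ C i ⬝ᵥ π y` attains its
maximum `δ i` on the extension `Q = {y | A y ≤ b}`. By LP duality there is a multiplier `μ_i ≥ 0`
with `μ_i A = C i ∘ π` and `μ_i ⬝ᵥ b = δ i`. Lifting each vertex `v j` to some `u j ∈ Q` then gives
`δ i - C i ⬝ᵥ v j = μ_i ⬝ᵥ (b - A u j)`: the rows of `T` are the multipliers and the columns of `U`
are the slacks of the lifted vertices in `A y ≤ b`.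

LP duality is derived from Farkas' lemma. That lemma follows from Hahn–Banach separation once one
knows that a finitely generated cone is closed, which holds because, by the conic Carathéodory
theorem, such a cone is a finite union of linearly independent simplicial cones.
-/

open Matrix

section ConicCombination

variable {ι V : Type*} [AddCommGroup V] [Module ℝ V]

theorem exists_sum_erase_smul_eq_of_sum_smul_eq_zero [DecidableEq ι] (w : ι → V) {s : Finset ι}
    {c g : ι → ℝ} (hc : ∀ i ∈ s, 0 ≤ c i) (hg : ∑ i ∈ s, g i • w i = 0)
    (hpos : ∃ i ∈ s, 0 < g i) :
    ∃ j ∈ s, ∃ c' : ι → ℝ, (∀ i ∈ s.erase j, 0 ≤ c' i) ∧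
      ∑ i ∈ s.erase j, c' i • w i = ∑ i ∈ s, c i • w i := by
  obtain ⟨j, hj, hjmin⟩ := Finset.exists_min_image (s.filter (0 < g ·)) (fun i => c i / g i)
    (by simpa [Finset.Nonempty] using hpos)
  rw [Finset.mem_filter] at hj
  set τ := c j / g j
  have hτ : 0 ≤ τ := div_nonneg (hc j hj.1) hj.2.le
  refine ⟨j, hj.1, fun i => c i - τ * g i, fun i hi => ?_, ?_⟩
  · have hi := (Finset.mem_erase.mp hi).2
    rcases le_or_gt (g i) 0 with hgi | hgi
    · nlinarith [hc i hi]
    · have := hjmin i (Finset.mem_filter.mpr ⟨hi, hgi⟩)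
      rw [le_div_iff₀ hgi] at this
      linarith
  · rw [Finset.sum_erase _ (by simp [τ, div_mul_cancel₀ _ hj.2.ne'])]
    simp only [sub_smul, mul_smul, Finset.sum_sub_distrib, ← Finset.smul_sum, hg, smul_zero,
      sub_zero]

theorem exists_linearIndepOn_sum_smul_eq (w : ι → V) (s : Finset ι) (c : ι → ℝ)
    (hc : ∀ i ∈ s, 0 ≤ c i) :
    ∃ t ⊆ s, LinearIndepOn ℝ w t ∧ ∃ c' : ι → ℝ, (∀ i ∈ t, 0 ≤ c' i) ∧
      ∑ i ∈ t, c' i • w i = ∑ i ∈ s, c i • w i := by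
  classical
  induction s using Finset.strongInduction generalizing c with
  | H s ih =>
    by_cases hli : LinearIndepOn ℝ w s
    · exact ⟨s, subset_rfl, hli, c, hc, rfl⟩
    obtain ⟨g, hg, i, hi, hgi⟩ : ∃ g : ι → ℝ, ∑ i ∈ s, g i • w i = 0 ∧ ∃ i ∈ s, g i ≠ 0 := by
      simpa [linearIndepOn_finset_iff] using hli
    obtain ⟨j, hj, c', hc', hsum⟩ : ∃ j ∈ s, ∃ c' : ι → ℝ, (∀ i ∈ s.erase j, 0 ≤ c' i) ∧
        ∑ i ∈ s.erase j, c' i • w i = ∑ i ∈ s, c i • w i := by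
      rcases hgi.lt_or_gt with hneg | hpos
      · exact exists_sum_erase_smul_eq_of_sum_smul_eq_zero w (g := -g) hc
          (by simp [neg_smul, hg]) ⟨i, hi, by simpa using hneg⟩
      · exact exists_sum_erase_smul_eq_of_sum_smul_eq_zero w hc hg ⟨i, hi, hpos⟩
    obtain ⟨t, hts, htli, c'', hc'', hsum'⟩ := ih _ (Finset.erase_ssubset hj) c' hc'
    exact ⟨t, hts.trans (Finset.erase_subset j s), htli, c'', hc'', hsum'.trans hsum⟩

variable [TopologicalSpace V] [IsTopologicalAddGroup V] [ContinuousSMul ℝ V]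

theorem isClosed_image_linearCombination_Ici [Fintype ι] [T2Space V] (w : ι → V) :
    IsClosed (Fintype.linearCombination ℝ w '' Set.Ici 0) := by
  classical
  have hunion : Fintype.linearCombination ℝ w '' Set.Ici 0 =
      ⋃ t ∈ {t : Finset ι | LinearIndepOn ℝ w t},
        Fintype.linearCombination ℝ (fun i : t => w i) '' Set.Ici 0 := by
    ext x
    simp only [Set.mem_image, Set.mem_Ici, Set.mem_iUnion, Set.mem_ofPred_eq, exists_prop,
      Fintype.linearCombination_apply]
    constructor
    · rintro ⟨c, hc, rfl⟩
      obtain ⟨t, -, ht, c', hc', hsum⟩ :=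
        exists_linearIndepOn_sum_smul_eq w Finset.univ c fun i _ => hc i
      exact ⟨t, ht, fun i => c' i, fun i => hc' i i.2,
        (Finset.sum_coe_sort t fun i => c' i • w i).trans hsum⟩
    · rintro ⟨t, -, d, hd, rfl⟩
      refine ⟨fun i => if h : i ∈ t then d ⟨i, h⟩ else 0, fun i => ?_, ?_⟩
      · dsimp only
        split_ifs
        exacts [hd _, le_rfl]
      · rw [← Finset.sum_subset t.subset_univ fun i _ hi => by simp [hi],
          ← Finset.sum_coe_sort t]
        simp
  rw [hunion]
  refine (Set.toFinite _).isClosed_biUnion fun t ht => ?_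
  have hinj := linearIndependent_iff_injective_fintypeLinearCombination.mp ht
  exact (LinearMap.isClosedEmbedding_of_injective (LinearMap.ker_eq_bot.mpr hinj)).isClosedMap _
    isClosed_Ici

theorem mem_image_linearCombination_Ici_of_forall [Fintype ι] [T2Space V]
    [LocallyConvexSpace ℝ V] (w : ι → V) {x : V}
    (h : ∀ f : StrongDual ℝ V, (∀ i, f (w i) ≤ 0) → f x ≤ 0) :
    x ∈ Fintype.linearCombination ℝ w '' Set.Ici 0 := by
  classical
  set K := Fintype.linearCombination ℝ w '' Set.Ici 0
  by_contra hx
  obtain ⟨f, u, hfK, hfx⟩ := geometric_hahn_banach_closed_point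
    ((convex_Ici 0).linear_image _) (isClosed_image_linearCombination_Ici w) hx
  have hsmul : ∀ y ∈ K, ∀ t : ℝ, 0 ≤ t → t • y ∈ K := by
    rintro _ ⟨c, hc, rfl⟩ t ht
    exact ⟨t • c, Set.mem_Ici.mpr (smul_nonneg ht hc), map_smul _ _ _⟩
  have hu : 0 < u := by simpa using hfK 0 ⟨0, Set.self_mem_Ici, map_zero _⟩
  have hK_nonpos : ∀ y ∈ K, f y ≤ 0 := by
    intro y hy
    by_contra! hfy
    have := hfK _ (hsmul y hy _ (div_nonneg hu.le hfy.le))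
    rw [map_smul, smul_eq_mul, div_mul_cancel₀ _ hfy.ne'] at this
    exact this.false
  have hw : ∀ i, w i ∈ K := fun i =>
    ⟨Pi.single i 1, Pi.single_nonneg.mpr zero_le_one, by simp⟩
  linarith [h f fun i => hK_nonpos _ (hw i)]

end ConicCombination

namespace Matrix

variable {κ ι : Type*} [Fintype ι]

theorem exists_nonneg_vecMul_eq_of_forall [Fintype κ] {M : Matrix κ ι ℝ} {x : ι → ℝ}
    (h : ∀ y, M *ᵥ y ≤ 0 → x ⬝ᵥ y ≤ 0) : ∃ μ, 0 ≤ μ ∧ μ ᵥ* M = x := by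
  classical
  obtain ⟨μ, hμ, rfl⟩ :=
      mem_image_linearCombination_Ici_of_forall (fun k => M k) (x := x) fun f hf => by
    have hf_eq : ∀ z, f z = z ⬝ᵥ fun j => f fun j' => if j = j' then 1 else 0 := fun z =>
      (LinearMap.pi_apply_eq_sum_univ f.toLinearMap z).trans (by simp [dotProduct])
    rw [hf_eq]
    exact h _ fun i => (hf_eq (M i)).symm.trans_le (hf i)
  exact ⟨μ, hμ, (vecMul_eq_sum μ M).trans (Fintype.linearCombination_apply ℝ _ μ).symm⟩

theorem dotProduct_le_mul_of_mulVec_le_smul {A : Matrix κ ι ℝ} {b : κ → ℝ} {c : ι → ℝ} {γ : ℝ}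
    {y₀ : ι → ℝ} (hy₀ : A *ᵥ y₀ ≤ b) (h : ∀ y, A *ᵥ y ≤ b → c ⬝ᵥ y ≤ γ) {y : ι → ℝ} {β : ℝ}
    (hβ : 0 ≤ β) (hy : A *ᵥ y ≤ β • b) : c ⬝ᵥ y ≤ β * γ := by
  -- `(β + t)⁻¹ • (y + t • y₀)` lies in the polyhedron for every `t > 0`; then let `t → 0`
  have key : ∀ t > 0, c ⬝ᵥ y - β * γ ≤ t * (γ - c ⬝ᵥ y₀) := by
    intro t ht
    have hβt : 0 < β + t := by linarith
    have hmem : A *ᵥ ((β + t)⁻¹ • (y + t • y₀)) ≤ b := fun ℓ => by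
      have h₁ := hy ℓ
      have h₂ := hy₀ ℓ
      simp only [mulVec_smul, mulVec_add, Pi.smul_apply, Pi.add_apply, smul_eq_mul] at h₁ ⊢
      rw [inv_mul_le_iff₀ hβt]
      nlinarith
    have := h _ hmem
    rw [dotProduct_smul, dotProduct_add, dotProduct_smul, smul_eq_mul, smul_eq_mul,
      inv_mul_le_iff₀ hβt] at this
    linarith
  have hγ : c ⬝ᵥ y₀ ≤ γ := h y₀ hy₀
  by_contra! hlt
  have hpos : 0 < c ⬝ᵥ y - β * γ := by linarith
  have := key ((c ⬝ᵥ y - β * γ) / (γ - c ⬝ᵥ y₀ + 1)) (by positivity)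
  rw [div_mul_eq_mul_div, le_div_iff₀ (by linarith)] at this
  nlinarith

theorem exists_nonneg_vecMul_eq_dotProduct_le [Fintype κ] {A : Matrix κ ι ℝ} {b : κ → ℝ}
    {c : ι → ℝ} {γ : ℝ} (hQ : ∃ y₀, A *ᵥ y₀ ≤ b) (h : ∀ y, A *ᵥ y ≤ b → c ⬝ᵥ y ≤ γ) :
    ∃ μ, 0 ≤ μ ∧ μ ᵥ* A = c ∧ μ ⬝ᵥ b ≤ γ := by
  obtain ⟨y₀, hy₀⟩ := hQ
  -- homogenization: `(c, -γ)` is a nonnegative combination of the rows `(A ℓ, -b ℓ)` and `(0, -1)`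
  have hhom : ∀ z, fromBlocks A (-replicateCol Unit b) (0 : Matrix Unit ι ℝ) (-1) *ᵥ z ≤ 0 →
      Sum.elim c (fun _ => -γ) ⬝ᵥ z ≤ 0 := by
    intro z hz
    have hβ : 0 ≤ z (Sum.inr ()) := by
      simpa [fromBlocks_mulVec, neg_mulVec] using hz (Sum.inr ())
    have hy : A *ᵥ (z ∘ Sum.inl) ≤ z (Sum.inr ()) • b := fun ℓ => by
      simpa [mulVec, dotProduct, mul_comm] using hz (Sum.inl ℓ)
    simpa [dotProduct, Fintype.sum_sum_type, mul_comm] using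
      dotProduct_le_mul_of_mulVec_le_smul hy₀ h hβ hy
  obtain ⟨μ, hμ, hμM⟩ := exists_nonneg_vecMul_eq_of_forall hhom
  rw [vecMul_fromBlocks] at hμM
  have hc : (μ ∘ Sum.inl) ᵥ* A = c := by
    ext j
    simpa using congrFun hμM (Sum.inl j)
  have hb : μ (Sum.inr ()) + ∑ ℓ, μ (Sum.inl ℓ) * b ℓ = γ :=
    neg_inj.mp (by simpa [vecMul, dotProduct] using congrFun hμM (Sum.inr ()))
  have hs : 0 ≤ μ (Sum.inr ()) := hμ _
  refine ⟨μ ∘ Sum.inl, fun ℓ => hμ (Sum.inl ℓ), hc, ?_⟩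
  simp only [dotProduct, Function.comp_apply]
  linarith

theorem exists_nonneg_vecMul_eq_dotProduct_eq_of_isGreatest [Fintype κ] {A : Matrix κ ι ℝ}
    {b : κ → ℝ} {c : ι → ℝ} {γ : ℝ} (h : IsGreatest ((c ⬝ᵥ ·) '' {y | A *ᵥ y ≤ b}) γ) :
    ∃ μ, 0 ≤ μ ∧ μ ᵥ* A = c ∧ μ ⬝ᵥ b = γ := by
  obtain ⟨⟨y, hy, rfl⟩, hmax⟩ := h
  obtain ⟨μ, hμ, hμA, hμb⟩ :=
    exists_nonneg_vecMul_eq_dotProduct_le ⟨y, hy⟩ fun y' hy' => hmax ⟨y', hy', rfl⟩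
  refine ⟨μ, hμ, hμA, le_antisymm hμb ?_⟩
  calc c ⬝ᵥ y = μ ⬝ᵥ (A *ᵥ y) := by rw [dotProduct_mulVec, hμA]
    _ ≤ μ ⬝ᵥ b := dotProduct_le_dotProduct_of_nonneg_left hy hμ

end Matrix

theorem stmt1_general {n d m k e : ℕ}
    (v : Fin n → (Fin d → ℝ))
    (C : Matrix (Fin m) (Fin d) ℝ) (δ : Fin m → ℝ)
    (htight : ∀ i, IsGreatest ((fun x => C i ⬝ᵥ x) '' convexHull ℝ (Set.range v)) (δ i))
    (A : Matrix (Fin k) (Fin e) ℝ) (b : Fin k → ℝ)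
    (π : (Fin e → ℝ) →ₗ[ℝ] (Fin d → ℝ))
    (hQ : π '' {y : Fin e → ℝ | ∀ i, A.mulVec y i ≤ b i} = convexHull ℝ (Set.range v)) :
    ∃ (T : Matrix (Fin m) (Fin k) ℝ) (U : Matrix (Fin k) (Fin n) ℝ),
      (∀ i ℓ, 0 ≤ T i ℓ) ∧ (∀ ℓ j, 0 ≤ U ℓ j) ∧
      ∀ i j, δ i - C i ⬝ᵥ v j = (T * U) i j := by
  have hdual : ∀ i, ∃ μ, 0 ≤ μ ∧ μ ᵥ* A = C i ᵥ* π.toMatrix' ∧ μ ⬝ᵥ b = δ i := fun i =>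
    exists_nonneg_vecMul_eq_dotProduct_eq_of_isGreatest <| by
      simpa only [← hQ, Set.image_image, ← dotProduct_mulVec, LinearMap.toMatrix'_mulVec,
        Pi.le_def] using htight i
  choose T hT0 hTA hTb using hdual
  have hpre : ∀ j, v j ∈ π '' {y | ∀ i, A.mulVec y i ≤ b i} := fun j =>
    hQ ▸ subset_convexHull ℝ _ (Set.mem_range_self j)
  choose u hu hπu using hpre
  refine ⟨Matrix.of T, Matrix.of fun ℓ j => (b - A *ᵥ u j) ℓ, hT0,
    fun ℓ j => sub_nonneg.mpr (hu j ℓ), fun i j => ?_⟩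
  calc δ i - C i ⬝ᵥ v j = T i ⬝ᵥ (b - A *ᵥ u j) := by
        rw [dotProduct_sub, hTb, dotProduct_mulVec, hTA, ← dotProduct_mulVec,
          LinearMap.toMatrix'_mulVec, hπu]
    _ = _ := by simp [mul_apply, dotProduct]

/-- Yannakakis: an extension of the polytope `P = conv{v_1,…,v_n} = {x : Cx ≤ δ}`
described by `k` inequalities yields a rank-`k` nonnegative factorization of the
slack matrix `S_{ij} = δ_i − C_i · v_j`. -/
theorem stmt1 {n d m k e : ℕ} (hn : 1 ≤ n)
    (v : Fin n → (Fin d → ℝ))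
    (C : Matrix (Fin m) (Fin d) ℝ) (δ : Fin m → ℝ)
    (hP : convexHull ℝ (Set.range v) = {x : Fin d → ℝ | ∀ i, C.mulVec x i ≤ δ i})
    (htight : ∀ i, IsGreatest ((fun x => C i ⬝ᵥ x) '' convexHull ℝ (Set.range v)) (δ i))
    (A : Matrix (Fin k) (Fin e) ℝ) (b : Fin k → ℝ)
    (π : (Fin e → ℝ) →ₗ[ℝ] (Fin d → ℝ))
    (hQ : π '' {y : Fin e → ℝ | ∀ i, A.mulVec y i ≤ b i} = convexHull ℝ (Set.range v)) :
    ∃ (T : Matrix (Fin m) (Fin k) ℝ) (U : Matrix (Fin k) (Fin n) ℝ),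
      (∀ i ℓ, 0 ≤ T i ℓ) ∧ (∀ ℓ j, 0 ≤ U ℓ j) ∧
      ∀ i j, δ i - C i ⬝ᵥ v j = (T * U) i j :=
  stmt1_general v C δ htight A b π hQ
end

section
/- Let n ≥ 3 and let P ⊆ ℝ² be the regular n-gon with vertices v_j = (cos(2πj/n), sin(2πj/n)) for j = 1, …, n. For i = 1, …, n let a_i = (cos((2i+1)π/n), sin((2i+1)π/n)), so that the facet-defining inequalities of P are ⟨a_i, x⟩ ≤ cos(π/n), and let S be the n×n slack matrix with S_{ij} = cos(π/n) − ⟨a_i, v_j⟩. Then S admits a rank r nonnegative factorization with r ≤ 2⌈log₂ n⌉; consequently the extension complexity of the regular n-gon is O(log n). -/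
open Matrix Real

/-!
Index the point of the unit circle at angle `kπ/n` by `k ∈ ℤ`; vertices of the `n`-gon get even
and facet normals odd indices, and the slack of a pair `(k, l)` is `cos(π/n) - cos((k - l)π/n)`.
Folding the circle along a line through the origin, i.e. reflecting the points lying below it,
changes `cos(x - y)` by `2 (sin⁺ x sin⁻ y + sin⁻ x sin⁺ y)`, where `x, y` are the angles of the
two points measured from the line: a sum of two products of a nonnegative function of the first
point and one of the second. The fold lines are chosen so that the arc containing all folded
points halves at each step; after `⌈log₂ n⌉` folds it spans two steps, so a facet normal and a
vertex, whose indices keep their different parities, end up adjacent, at cosine `cos(π/n)`.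
Telescoping writes the slack matrix as a sum of `2⌈log₂ n⌉` nonnegative rank-one matrices.
-/

theorem Matrix.exists_nonneg_factorization_of_eq_sum {R m n ι : Type*} [Semiring R] [LE R]
    [Fintype ι] {r : ℕ} (e : ι ≃ Fin r) (S : Matrix m n R) (f : m → ι → R) (g : ι → n → R)
    (hf : ∀ i ℓ, 0 ≤ f i ℓ) (hg : ∀ ℓ j, 0 ≤ g ℓ j) (hS : ∀ i j, S i j = ∑ ℓ, f i ℓ * g ℓ j) :
    ∃ (T : Matrix m (Fin r) R) (U : Matrix (Fin r) n R),
      (∀ i ℓ, 0 ≤ T i ℓ) ∧ (∀ ℓ j, 0 ≤ U ℓ j) ∧ S = T * U := by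
  refine ⟨of fun i ℓ => f i (e.symm ℓ), of fun ℓ j => g (e.symm ℓ) j,
    fun _ _ => hf _ _, fun _ _ => hg _ _, ?_⟩
  ext i j
  rw [hS, mul_apply]
  exact (e.symm.sum_comp fun ℓ => f i ℓ * g ℓ j).symm

namespace RegularPolygon

noncomputable def foldAngle (x : ℝ) : ℝ := if sin x < 0 then -x else x

theorem cos_foldAngle (x : ℝ) : cos (foldAngle x) = cos x := by
  unfold foldAngle
  split_ifs <;> simp only [cos_neg]

theorem sin_foldAngle (x : ℝ) : sin (foldAngle x) = |sin x| := by
  unfold foldAngle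
  split_ifs with h
  · rw [sin_neg, abs_of_neg h]
  · rw [abs_of_nonneg (not_lt.1 h)]

theorem cos_foldAngle_sub_foldAngle (x y : ℝ) :
    cos (foldAngle x - foldAngle y) - cos (x - y) =
      2 * ((sin x)⁺ * (sin y)⁻ + (sin x)⁻ * (sin y)⁺) := by
  rw [cos_sub, cos_sub, cos_foldAngle, cos_foldAngle, sin_foldAngle, sin_foldAngle,
    ← posPart_add_negPart, ← posPart_add_negPart (sin y)]
  linear_combination ((sin y)⁺ - (sin y)⁻) * posPart_sub_negPart (sin x) +
    sin x * posPart_sub_negPart (sin y)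

noncomputable def angle (n : ℕ) (k : ℤ) : ℝ := k * (π / n)

theorem angle_sub (n : ℕ) (k l : ℤ) : angle n (k - l) = angle n k - angle n l := by
  simp only [angle, Int.cast_sub, sub_mul]

theorem exists_angle_eq_add_int_mul_two_pi {n : ℕ} (hn : n ≠ 0) {k l : ℤ}
    (h : k ≡ l [ZMOD 2 * n]) : ∃ z : ℤ, angle n l = angle n k + z * (2 * π) := by
  obtain ⟨z, hz⟩ := Int.modEq_iff_dvd.1 h
  refine ⟨z, ?_⟩
  have hl : (l : ℝ) = k + 2 * n * z := by exact_mod_cast (by linarith : l = k + 2 * n * z)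
  simp only [angle, hl]
  field_simp

theorem sin_angle_congr {n : ℕ} (hn : n ≠ 0) {k l : ℤ} (h : k ≡ l [ZMOD 2 * n]) :
    sin (angle n k) = sin (angle n l) := by
  obtain ⟨z, hz⟩ := exists_angle_eq_add_int_mul_two_pi hn h
  rw [hz, sin_add_int_mul_two_pi]

theorem cos_angle_congr {n : ℕ} (hn : n ≠ 0) {k l : ℤ} (h : k ≡ l [ZMOD 2 * n]) :
    cos (angle n k) = cos (angle n l) := by
  obtain ⟨z, hz⟩ := exists_angle_eq_add_int_mul_two_pi hn h
  rw [hz, cos_add_int_mul_two_pi]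

theorem sin_angle_neg_iff {n : ℕ} (hn : 0 < n) (k : ℤ) :
    sin (angle n k) < 0 ↔ (n : ℤ) < k % (2 * n) := by
  have hN : (0 : ℤ) < 2 * n := by positivity
  have hr0 := Int.emod_nonneg k hN.ne'
  have hr1 := Int.emod_lt_of_pos k hN
  have hnR : (0 : ℝ) < n := by exact_mod_cast hn
  rw [sin_angle_congr hn.ne' (Int.mod_modEq k _).symm]
  set r := k % (2 * n)
  constructor
  · intro hneg
    by_contra hle
    refine hneg.not_ge (sin_nonneg_of_nonneg_of_le_pi (by unfold angle; positivity) ?_)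
    have : (r : ℝ) ≤ n := by exact_mod_cast not_lt.1 hle
    calc angle n r ≤ n * (π / n) := by unfold angle; gcongr
      _ = π := by field_simp
  · intro hlt
    rw [sin_angle_congr hn.ne' (show r ≡ r - 2 * n [ZMOD 2 * n] from
      Int.modEq_iff_dvd.2 ⟨-1, by ring⟩)]
    have h1 : (r : ℝ) < 2 * n := by exact_mod_cast hr1
    have h2 : (n : ℝ) < r := by exact_mod_cast hlt
    apply sin_neg_of_neg_of_neg_pi_lt <;> unfold angle <;> push_cast
    · exact mul_neg_of_neg_of_pos (by linarith) (by positivity)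
    · rw [← sub_pos]; field_simp; nlinarith [pi_pos]

-- Reflects the point `k` in the line through the point `c` when it lies strictly below that line.
def fold (n : ℕ) (c k : ℤ) : ℤ := if (n : ℤ) < (k - c) % (2 * n) then 2 * c - k else k

theorem angle_fold_sub {n : ℕ} (hn : 0 < n) (c k : ℤ) :
    angle n (fold n c k - c) = foldAngle (angle n (k - c)) := by
  unfold fold foldAngle
  simp only [sin_angle_neg_iff hn]
  split_ifs
  · simp only [angle]; push_cast; ring
  · rfl

theorem cos_angle_fold_sub_fold {n : ℕ} (hn : 0 < n) (c k l : ℤ) :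
    cos (angle n (fold n c k - fold n c l)) - cos (angle n (k - l)) =
      2 * ((sin (angle n (k - c)))⁺ * (sin (angle n (l - c)))⁻ +
        (sin (angle n (k - c)))⁻ * (sin (angle n (l - c)))⁺) := by
  rw [← cos_foldAngle_sub_foldAngle, ← angle_fold_sub hn, ← angle_fold_sub hn, ← angle_sub,
    ← angle_sub, sub_sub_sub_cancel_right, sub_sub_sub_cancel_right]

theorem fold_emod_two (n : ℕ) (c k : ℤ) : fold n c k % 2 = k % 2 := by
  unfold fold
  split_ifs <;> omega

theorem fold_sub_emod_le {n : ℕ} (hn : 0 < n) {c h k : ℤ} (hh : h ≤ n)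
    (hk : (k - c) % (2 * n) ≤ 2 * h) : (fold n (c + h) k - (c + h)) % (2 * n) ≤ h := by
  have hN : (0 : ℤ) < 2 * n := by positivity
  have emod_eq : ∀ {a r q : ℤ}, r + 2 * n * q = a → 0 ≤ r → r < 2 * n → a % (2 * n) = r :=
    fun hr h0 h1 => ((Int.ediv_emod_unique hN).2 ⟨hr, h0, h1⟩).2
  set u := (k - c) % (2 * n)
  have hu0 : 0 ≤ u := Int.emod_nonneg _ hN.ne'
  set q := (k - c) / (2 * n)
  have hq : u + 2 * n * q = k - c := Int.emod_add_mul_ediv _ _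
  unfold fold
  rcases le_or_gt h u with hhu | huh
  · have hr : (k - (c + h)) % (2 * n) = u - h :=
      emod_eq (q := q) (by linarith) (by omega) (by omega)
    rw [hr, if_neg (by omega), hr]
    omega
  · have hr : (k - (c + h)) % (2 * n) = u - h + 2 * n :=
      emod_eq (q := q - 1) (by linarith) (by omega) (by omega)
    rw [hr]
    split_ifs
    · have hr' : (2 * (c + h) - k - (c + h)) % (2 * n) = h - u :=
        emod_eq (q := -q) (by linarith) (by omega) (by omega)
      omega
    · omega

-- `halfLength n t = ⌈n / 2 ^ t⌉`; after the fold at `foldCenter n t` every point lies in the arc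
-- of that many steps starting at `foldCenter n t`.
def halfLength (n : ℕ) : ℕ → ℕ
  | 0 => n
  | t + 1 => (halfLength n t + 1) / 2

def foldCenter (n : ℕ) : ℕ → ℤ
  | 0 => 0
  | t + 1 => foldCenter n t + halfLength n (t + 1)

def foldIter (n : ℕ) (k : ℤ) : ℕ → ℤ
  | 0 => k
  | t + 1 => fold n (foldCenter n t) (foldIter n k t)

theorem halfLength_le (n t : ℕ) : halfLength n t ≤ n := by
  induction t with
  | zero => exact le_rfl
  | succ t ih => simp only [halfLength]; omega

theorem halfLength_le_of_le_two_pow_mul {n b : ℕ} {t : ℕ} (h : n ≤ 2 ^ t * b) :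
    halfLength n t ≤ b := by
  induction t generalizing b with
  | zero => simpa [halfLength] using h
  | succ t ih =>
    have := ih (b := 2 * b) (by rw [pow_succ] at h; linarith)
    simp only [halfLength]
    omega

theorem foldIter_emod_two (n : ℕ) (k : ℤ) (t : ℕ) : foldIter n k t % 2 = k % 2 := by
  induction t with
  | zero => rfl
  | succ t ih => rw [foldIter, fold_emod_two, ih]

theorem foldIter_sub_foldCenter_emod_le {n : ℕ} (hn : 0 < n) (k : ℤ) (t : ℕ) :
    (foldIter n k (t + 1) - foldCenter n t) % (2 * n) ≤ halfLength n t := by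
  induction t with
  | zero =>
    -- the first fold halves the whole circle, viewed as an arc of `2n` steps starting at `-n`
    have hk : (k - -n) % (2 * n) ≤ 2 * n := (Int.emod_lt_of_pos _ (by positivity)).le
    simpa [foldIter, foldCenter, halfLength] using fold_sub_emod_le hn le_rfl hk
  | succ t ih =>
    have := halfLength_le n (t + 1)
    exact fold_sub_emod_le hn (by omega) (ih.trans (by simp only [halfLength]; omega))

theorem foldIter_sub_foldIter_modEq {n : ℕ} (hn : 0 < n) {t : ℕ} (ht : halfLength n t ≤ 2)
    {k l : ℤ} (hkl : (k - l) % 2 = 1) :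
    foldIter n k (t + 1) - foldIter n l (t + 1) ≡ 1 [ZMOD 2 * n] ∨
      foldIter n k (t + 1) - foldIter n l (t + 1) ≡ -1 [ZMOD 2 * n] := by
  set c := foldCenter n t
  set x := foldIter n k (t + 1) - c
  set y := foldIter n l (t + 1) - c
  have hx : x % (2 * n) ≤ halfLength n t := foldIter_sub_foldCenter_emod_le hn k t
  have hy : y % (2 * n) ≤ halfLength n t := foldIter_sub_foldCenter_emod_le hn l t
  have hx0 : 0 ≤ x % (2 * n) := Int.emod_nonneg _ (by positivity)
  have hy0 : 0 ≤ y % (2 * n) := Int.emod_nonneg _ (by positivity)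
  have hx2 : x % (2 * n) % 2 = x % 2 := Int.emod_emod_of_dvd _ (dvd_mul_right 2 _)
  have hy2 : y % (2 * n) % 2 = y % 2 := Int.emod_emod_of_dvd _ (dvd_mul_right 2 _)
  have hk := foldIter_emod_two n k (t + 1)
  have hl := foldIter_emod_two n l (t + 1)
  have hxy : foldIter n k (t + 1) - foldIter n l (t + 1) ≡
      x % (2 * n) - y % (2 * n) [ZMOD 2 * n] := by
    simpa [x, y] using ((Int.mod_modEq x _).sub (Int.mod_modEq y _)).symm
  have hodd : x % (2 * n) - y % (2 * n) = 1 ∨ x % (2 * n) - y % (2 * n) = -1 := by omega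
  rcases hodd with h | h <;> rw [h] at hxy <;> simp [hxy]

noncomputable def offsetSin (n : ℕ) (k : ℤ) (t : ℕ) : ℝ :=
  sin (angle n (foldIter n k t - foldCenter n t))

theorem cos_angle_foldIter_sub_foldIter {n : ℕ} (hn : 0 < n) (k l : ℤ) (m : ℕ) :
    cos (angle n (foldIter n k m - foldIter n l m)) - cos (angle n (k - l)) =
      ∑ t ∈ Finset.range m, 2 * ((offsetSin n k t)⁺ * (offsetSin n l t)⁻ +
        (offsetSin n k t)⁻ * (offsetSin n l t)⁺) := by
  let D t := cos (angle n (foldIter n k t - foldIter n l t))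
  exact (Finset.sum_range_sub D m).symm.trans
    (Finset.sum_congr rfl fun t _ => cos_angle_fold_sub_fold hn _ _ _)

noncomputable def facetFactor (n : ℕ) (k : ℤ) (t : ℕ) : Fin 2 → ℝ :=
  ![(offsetSin n k t)⁺, (offsetSin n k t)⁻]

noncomputable def vertexFactor (n : ℕ) (l : ℤ) (t : ℕ) : Fin 2 → ℝ :=
  ![2 * (offsetSin n l t)⁻, 2 * (offsetSin n l t)⁺]

theorem facetFactor_nonneg (n : ℕ) (k : ℤ) (t : ℕ) (b : Fin 2) :
    0 ≤ facetFactor n k t b := by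
  fin_cases b <;> simp [facetFactor, posPart_nonneg, negPart_nonneg]

theorem vertexFactor_nonneg (n : ℕ) (l : ℤ) (t : ℕ) (b : Fin 2) :
    0 ≤ vertexFactor n l t b := by
  fin_cases b <;> simp [vertexFactor, posPart_nonneg, negPart_nonneg]

theorem cos_pi_div_sub_cos_angle_eq_sum {n : ℕ} (hn : 1 < n) {k l : ℤ}
    (hkl : (k - l) % 2 = 1) :
    cos (π / n) - cos (angle n (k - l)) =
      ∑ p : Fin (Nat.clog 2 n) × Fin 2, facetFactor n k p.1 p.2 * vertexFactor n l p.1 p.2 := by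
  obtain ⟨t, ht⟩ := Nat.exists_eq_add_one_of_ne_zero (Nat.clog_pos one_lt_two hn).ne'
  have hL : halfLength n t ≤ 2 := halfLength_le_of_le_two_pow_mul <| by
    rw [← pow_succ, ← ht]; exact Nat.le_pow_clog one_lt_two n
  have hcos : cos (angle n (foldIter n k (t + 1) - foldIter n l (t + 1))) = cos (π / n) := by
    rcases foldIter_sub_foldIter_modEq (by omega) hL hkl with h | h <;>
      rw [cos_angle_congr (by omega) h] <;> simp [angle]
  rw [Fintype.sum_prod_type, Fin.sum_univ_eq_sum_range
    (fun t => ∑ b, facetFactor n k t b * vertexFactor n l t b), ht, ← hcos,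
    cos_angle_foldIter_sub_foldIter (by omega)]
  simp only [facetFactor, vertexFactor, Fin.sum_univ_two, cons_val_zero, cons_val_one]
  exact Finset.sum_congr rfl fun _ _ => by ring

end RegularPolygon

theorem Matrix.vec_cos_sin_dotProduct (α β : ℝ) :
    ![cos α, sin α] ⬝ᵥ ![cos β, sin β] = cos (α - β) := by
  simp [dotProduct, Fin.sum_univ_two, cos_sub]

/-- The slack matrix of the regular `n`-gon admits a nonnegative factorization of
rank at most `2⌈log₂ n⌉`; consequently its extension complexity is `O(log n)`. -/
theorem stmt2 (n : ℕ) (hn : 3 ≤ n)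
    (v : Fin n → (Fin 2 → ℝ))
    (hv : ∀ j : Fin n, v j =
      ![Real.cos (2 * π * ((j.1 : ℝ) + 1) / n), Real.sin (2 * π * ((j.1 : ℝ) + 1) / n)])
    (a : Fin n → (Fin 2 → ℝ))
    (ha : ∀ i : Fin n, a i =
      ![Real.cos ((2 * ((i.1 : ℝ) + 1) + 1) * π / n), Real.sin ((2 * ((i.1 : ℝ) + 1) + 1) * π / n)])
    (S : Matrix (Fin n) (Fin n) ℝ)
    (hS : ∀ i j, S i j = Real.cos (π / n) - a i ⬝ᵥ v j) :
    ∃ r : ℕ, r ≤ 2 * Nat.clog 2 n ∧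
      ∃ (T : Matrix (Fin n) (Fin r) ℝ) (U : Matrix (Fin r) (Fin n) ℝ),
        (∀ i ℓ, 0 ≤ T i ℓ) ∧ (∀ ℓ j, 0 ≤ U ℓ j) ∧ S = T * U := by
  have hS' (i j : Fin n) :
      S i j = cos (π / n) -
        cos (RegularPolygon.angle n ((2 * i.1 + 3 : ℤ) - (2 * j.1 + 2 : ℤ))) := by
    have : (n : ℝ) ≠ 0 := by positivity
    rw [hS, ha, hv, vec_cos_sin_dotProduct, RegularPolygon.angle]
    congr 2
    push_cast
    field_simp
    ring
  obtain ⟨T, U, hT, hU, hTU⟩ := exists_nonneg_factorization_of_eq_sum finProdFinEquiv S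
    (fun i p => RegularPolygon.facetFactor n (2 * i.1 + 3) p.1 p.2)
    (fun p j => RegularPolygon.vertexFactor n (2 * j.1 + 2) p.1 p.2)
    (fun _ _ => RegularPolygon.facetFactor_nonneg _ _ _ _)
    (fun _ _ => RegularPolygon.vertexFactor_nonneg _ _ _ _)
    fun i j => by
      rw [hS']
      exact RegularPolygon.cos_pi_div_sub_cos_angle_eq_sum (by omega) (by omega)
  exact ⟨_, (Nat.mul_comm _ _).le, T, U, hT, hU, hTU⟩
end

section
/- Let n ≥ 3 and let v_1, …, v_n ∈ ℝ² be points in convex position (each v_j is an extreme point of P := conv{v_1,…,v_n}) whose 2n coordinates form a set of reals that is algebraically independent over ℚ. Suppose A is a real k×d matrix and b ∈ ℝ^k such that Q := {x ∈ ℝ^d : Ax ≤ b} is nonempty and bounded, and the image of Q under the projection x ↦ (x_1, x_2) onto the first two coordinates equals P. Then k² ≥ 2n; in particular k ≥ √(2n). -/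
/-!
After scaling each row, the right-hand side `b` becomes the sign vector of `b`, so it is rational.
Every vertex of `P` is the projection of a vertex `x` of the compact polytope `Q`. The rows tight
at `x` have trivial common kernel, so `x` solves the normal equations of its tight subsystem, and
Cramer's rule makes the coordinates of `x` algebraic over the ring generated by the `kd` entries of
`A`. Thus `2n` algebraically independent numbers are algebraic over `kd` numbers, which forces
`2n ≤ kd` (transcendence degree), and `d ≤ k` because `A` itself is injective.
-/

open Matrix Set Filter Topology

theorem AlgebraicIndependent.card_le_card_of_isAlgebraic {R A ι κ : Type*} [CommRing R]
    [CommRing A] [IsDomain A] [Algebra R A] [FaithfulSMul R A] [Fintype ι] [Fintype κ]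
    {w : ι → A} (hw : AlgebraicIndependent R w) (g : κ → A)
    (halg : ∀ i, IsAlgebraic (Algebra.adjoin R (range g)) (w i)) :
    Fintype.card ι ≤ Fintype.card κ := by
  have := (algebraMap R A).domain_nontrivial
  have hindep : (matroid R A).Indep (range w) := hw.to_subtype_range
  have hclosure : range w ⊆ (matroid R A).closure (range g) := by
    rw [matroid_closure_eq]
    rintro _ ⟨i, rfl⟩
    exact halg i
  have h := calc ENat.card ι
      ≤ (range w).encard := hw.injective.encard_range
    _ ≤ (matroid R A).eRk ((matroid R A).closure (range g)) :=
        hindep.encard_le_eRk_of_subset hclosure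
    _ = (matroid R A).eRk (range g) := Matroid.eRk_closure_eq _ _
    _ ≤ (range g).encard := Matroid.eRk_le_encard _ _
    _ ≤ ENat.card κ := by rw [← image_univ, ← encard_univ]; exact encard_image_le g univ
  simpa using h

theorem Matrix.isAlgebraic_of_mulVec_eq {K R p ι : Type*} [Field K] [LinearOrder K]
    [IsStrictOrderedRing K] [CommRing R] [Algebra R K] [Fintype p] [Fintype ι] [DecidableEq ι]
    (S : Subalgebra R K) {A : Matrix p ι K} {c : p → K} (hA : ∀ i j, A i j ∈ S)
    (hc : ∀ i, c i ∈ S) (hker : ∀ u, A *ᵥ u = 0 → u = 0) {x : ι → K} (hx : A *ᵥ x = c)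
    (j : ι) : IsAlgebraic S (x j) := by
  set f := algebraMap S K
  set M : Matrix p ι S := of fun i j => ⟨A i j, hA i j⟩
  set c' : p → S := fun i => ⟨c i, hc i⟩
  have hAM : f.mapMatrix (Mᵀ * M) = Aᵀ * A := by
    rw [RingHom.mapMatrix_apply, Matrix.map_mul, transpose_map]; rfl
  have hdet : (Aᵀ * A).det ≠ 0 := by
    rw [Ne, ← exists_mulVec_eq_zero_iff]
    rintro ⟨u, hu0, hu⟩
    have : u ∈ LinearMap.ker (Aᵀ * A).mulVecLin := hu
    rw [ker_mulVecLin_transpose_mul_self] at this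
    exact hu0 (hker u this)
  have hcramer : (Aᵀ * A).det * x j = ((Aᵀ * A).adjugate *ᵥ (Aᵀ *ᵥ c)) j := by
    rw [← hx, mulVec_mulVec, mulVec_mulVec, Matrix.mul_assoc, adjugate_mul, smul_mulVec,
      one_mulVec, Pi.smul_apply, smul_eq_mul]
  have hdet_eq : (Aᵀ * A).det = f (Mᵀ * M).det := by
    rw [RingHom.map_det, hAM]
  have hrhs_eq : ((Aᵀ * A).adjugate *ᵥ (Aᵀ *ᵥ c)) j =
      f (((Mᵀ * M).adjugate *ᵥ (Mᵀ *ᵥ c')) j) := by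
    rw [RingHom.map_mulVec, ← RingHom.mapMatrix_apply, RingHom.map_adjugate, hAM]
    congr 2
    ext i
    rw [Function.comp_apply, RingHom.map_mulVec]
    rfl
  refine IsAlgebraic.of_mul (mem_nonZeroDivisors_of_ne_zero hdet) ?_ ?_
  · rw [hdet_eq]; exact isAlgebraic_algebraMap _
  · rw [hcramer, hrhs_eq]; exact isAlgebraic_algebraMap _

theorem IsExtreme.inter_preimage {𝕜 E F : Type*} [Ring 𝕜] [PartialOrder 𝕜] [AddRightMono 𝕜]
    [AddCommGroup E] [Module 𝕜 E] [AddCommGroup F] [Module 𝕜 F] (f : E →ₗ[𝕜] F) {s : Set E}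
    {t : Set F} (h : IsExtreme 𝕜 (f '' s) t) : IsExtreme 𝕜 s (s ∩ f ⁻¹' t) := by
  refine ⟨inter_subset_left, fun x₁ hx₁ x₂ hx₂ x hx hseg => ⟨hx₁, ?_⟩⟩
  have hseg' : f x ∈ openSegment 𝕜 (f x₁) (f x₂) := by
    have := image_openSegment 𝕜 f.toAffineMap x₁ x₂
    rw [LinearMap.coe_toAffineMap] at this
    exact this ▸ mem_image_of_mem f hseg
  exact h.left_mem_of_mem_openSegment (mem_image_of_mem f hx₁) (mem_image_of_mem f hx₂) hx.2 hseg'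

theorem exists_mem_extremePoints_apply_eq {E F : Type*} [AddCommGroup E] [Module ℝ E]
    [TopologicalSpace E] [T2Space E] [IsTopologicalAddGroup E] [ContinuousSMul ℝ E]
    [LocallyConvexSpace ℝ E] [AddCommGroup F] [Module ℝ F] [TopologicalSpace F] [T1Space F]
    {s : Set E} (hs : IsCompact s) (f : E →L[ℝ] F) {y : F} (hy : y ∈ (f '' s).extremePoints ℝ) :
    ∃ x ∈ s.extremePoints ℝ, f x = y := by
  have hfiber : IsExtreme ℝ s (s ∩ f ⁻¹' {y}) :=
    (isExtreme_singleton.2 hy).inter_preimage f.toLinearMap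
  have hne : (s ∩ f ⁻¹' {y}).Nonempty := by
    obtain ⟨x, hx, hxy⟩ := hy.1
    exact ⟨x, hx, hxy⟩
  obtain ⟨x, hx⟩ :=
    (hs.inter_right (isClosed_singleton.preimage f.continuous)).extremePoints_nonempty hne
  exact ⟨x, hfiber.extremePoints_subset_extremePoints hx, hx.1.2⟩

section Polyhedron

variable {m ι : Type*} [Fintype ι]

def polyhedron (A : Matrix m ι ℝ) (b : m → ℝ) : Set (ι → ℝ) :=
  {x | ∀ i, (A *ᵥ x) i ≤ b i}

theorem isClosed_polyhedron (A : Matrix m ι ℝ) (b : m → ℝ) : IsClosed (polyhedron A b) := by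
  rw [polyhedron, ofPred_forall]
  exact isClosed_iInter fun i => isClosed_le (by fun_prop) continuous_const

variable [Fintype m] {A : Matrix m ι ℝ} {b : m → ℝ}

theorem exists_polyhedron_sign_eq (A : Matrix m ι ℝ) (b : m → ℝ) :
    ∃ A' : Matrix m ι ℝ, polyhedron A' (fun i => SignType.sign (b i)) = polyhedron A b := by
  classical
  set s : m → ℝ := fun i => if b i = 0 then 1 else |b i|⁻¹
  have hs : ∀ i, 0 < s i := fun i => by
    by_cases h : b i = 0 <;> simp [s, h]
  have hsb : ∀ i, s i * b i = SignType.sign (b i) := fun i => by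
    rcases lt_trichotomy (b i) 0 with h | h | h
    · simp [s, h.ne, abs_of_neg h, h]
    · simp [s, h]
    · simp [s, h.ne', abs_of_pos h, h]
  refine ⟨diagonal s * A, ?_⟩
  ext x
  simp only [polyhedron, mem_ofPred_eq, ← mulVec_mulVec, mulVec_diagonal, ← hsb,
    mul_le_mul_iff_right₀ (hs _)]

theorem eq_zero_of_mem_extremePoints_polyhedron {x u : ι → ℝ}
    (hx : x ∈ (polyhedron A b).extremePoints ℝ) (hu : ∀ i, (A *ᵥ x) i = b i → (A *ᵥ u) i = 0) :
    u = 0 := by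
  by_contra hu0
  have hline : ∀ᶠ t in 𝓝 (0 : ℝ), x + t • u ∈ polyhedron A b := by
    refine eventually_all.2 fun i => ?_
    rcases (hx.1 i).eq_or_lt with htight | hslack
    · refine .of_forall fun t => ?_
      simp [mulVec_add, mulVec_smul, hu i htight, htight]
    · have hcont : Continuous fun t : ℝ => (A *ᵥ (x + t • u)) i := by fun_prop
      have h0 : (A *ᵥ (x + (0 : ℝ) • u)) i < b i := by simpa using hslack
      exact (hcont.continuousAt.eventually_lt continuousAt_const h0).mono fun _ => le_of_lt
  have hline' : ∀ᶠ t in 𝓝 (0 : ℝ), x + (-t) • u ∈ polyhedron A b :=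
    (continuous_neg.tendsto' 0 0 neg_zero).eventually hline
  obtain ⟨t, ⟨hpos, hneg⟩, ht⟩ :=
    (((hline.and hline').filter_mono nhdsWithin_le_nhds).and self_mem_nhdsWithin).exists
      (f := 𝓝[≠] (0 : ℝ))
  have hseg : x ∈ openSegment ℝ (x + t • u) (x + (-t) • u) :=
    ⟨1 / 2, 1 / 2, by norm_num, by norm_num, by norm_num, by module⟩
  exact smul_ne_zero ht hu0 (by simpa using hx.2 hpos hneg hseg)

theorem card_le_card_of_mem_extremePoints_polyhedron {x : ι → ℝ}
    (hx : x ∈ (polyhedron A b).extremePoints ℝ) : Fintype.card ι ≤ Fintype.card m := by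
  have hinj : Function.Injective A.mulVecLin := by
    rw [← LinearMap.ker_eq_bot, LinearMap.ker_eq_bot']
    intro u hu
    exact eq_zero_of_mem_extremePoints_polyhedron hx fun i _ => congrFun hu i
  simpa using LinearMap.finrank_le_finrank_of_injective hinj

theorem isAlgebraic_of_mem_extremePoints_polyhedron {R : Type*} [CommRing R] [Algebra R ℝ]
    (S : Subalgebra R ℝ) (hA : ∀ i j, A i j ∈ S) (hb : ∀ i, b i ∈ S) {x : ι → ℝ}
    (hx : x ∈ (polyhedron A b).extremePoints ℝ) (j : ι) : IsAlgebraic S (x j) := by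
  classical
  let tight := {i // (A *ᵥ x) i = b i}
  refine isAlgebraic_of_mulVec_eq S (A := A.submatrix (Subtype.val : tight → m) id)
    (fun _ _ => hA _ _) (fun i => hb i) (fun u hu => ?_) (funext fun i => i.2) j
  exact eq_zero_of_mem_extremePoints_polyhedron hx fun i hi => congrFun hu ⟨i, hi⟩

end Polyhedron

theorem stmt5_general {n d k : ℕ} (hd : 2 ≤ d)
    (v : Fin n → (Fin 2 → ℝ))
    (hext : ∀ j, v j ∈ Set.extremePoints ℝ (convexHull ℝ (Set.range v)))
    (halg : AlgebraicIndependent ℚ (fun p : Fin n × Fin 2 => v p.1 p.2))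
    (A : Matrix (Fin k) (Fin d) ℝ) (b : Fin k → ℝ)
    (hne : {x : Fin d → ℝ | ∀ i, A.mulVec x i ≤ b i}.Nonempty)
    (hbd : Bornology.IsBounded {x : Fin d → ℝ | ∀ i, A.mulVec x i ≤ b i})
    (hproj : (fun (x : Fin d → ℝ) (i : Fin 2) => x (Fin.castLE hd i)) ''
        {x : Fin d → ℝ | ∀ i, A.mulVec x i ≤ b i} = convexHull ℝ (Set.range v)) :
    2 * n ≤ k ^ 2 ∧ Real.sqrt (2 * n) ≤ (k : ℝ) := by
  obtain ⟨A', hQ⟩ := exists_polyhedron_sign_eq A b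
  let π : (Fin d → ℝ) →L[ℝ] (Fin 2 → ℝ) :=
    ContinuousLinearMap.pi fun i => ContinuousLinearMap.proj (Fin.castLE hd i)
  change (polyhedron A b).Nonempty at hne
  change Bornology.IsBounded (polyhedron A b) at hbd
  change π '' polyhedron A b = _ at hproj
  rw [← hQ] at hne hbd hproj
  have hcompact := Metric.isCompact_of_isClosed_isBounded (isClosed_polyhedron _ _) hbd
  have hdk : d ≤ k := by
    simpa using card_le_card_of_mem_extremePoints_polyhedron
      (hcompact.extremePoints_nonempty hne).some_mem
  set S := Algebra.adjoin ℚ (range fun q : Fin k × Fin d => A' q.1 q.2)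
  have hcoord : ∀ p : Fin n × Fin 2, IsAlgebraic S (v p.1 p.2) := by
    rintro ⟨j, c⟩
    obtain ⟨x, hx, hxv⟩ := exists_mem_extremePoints_apply_eq hcompact π (hproj ▸ hext j)
    rw [← hxv]
    refine isAlgebraic_of_mem_extremePoints_polyhedron S
      (fun i j => Algebra.subset_adjoin ⟨(i, j), rfl⟩) (fun i => ?_) hx _
    cases SignType.sign (b i) <;> simp [one_mem, zero_mem]
  have hcard := halg.card_le_card_of_isAlgebraic _ hcoord
  simp only [Fintype.card_prod, Fintype.card_fin] at hcard
  have h2n : 2 * n ≤ k ^ 2 := by nlinarith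
  exact ⟨h2n, (Real.sqrt_le_left k.cast_nonneg).2 (by exact_mod_cast h2n)⟩

/-- A generic convex `n`-gon (vertices in convex position whose `2n` coordinates are
algebraically independent over `ℚ`) has extension complexity at least `√(2n)`: any
bounded nonempty polyhedron `{x : Ax ≤ b}` projecting onto it via the projection onto
the first two coordinates satisfies `k² ≥ 2n`, hence `k ≥ √(2n)`. -/
theorem stmt5 {n d k : ℕ} (hn : 3 ≤ n) (hd : 2 ≤ d)
    (v : Fin n → (Fin 2 → ℝ))
    (hext : ∀ j, v j ∈ Set.extremePoints ℝ (convexHull ℝ (Set.range v)))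
    (halg : AlgebraicIndependent ℚ (fun p : Fin n × Fin 2 => v p.1 p.2))
    (A : Matrix (Fin k) (Fin d) ℝ) (b : Fin k → ℝ)
    (hne : {x : Fin d → ℝ | ∀ i, A.mulVec x i ≤ b i}.Nonempty)
    (hbd : Bornology.IsBounded {x : Fin d → ℝ | ∀ i, A.mulVec x i ≤ b i})
    (hproj : (fun (x : Fin d → ℝ) (i : Fin 2) => x (Fin.castLE hd i)) ''
        {x : Fin d → ℝ | ∀ i, A.mulVec x i ≤ b i} = convexHull ℝ (Set.range v)) :
    2 * n ≤ k ^ 2 ∧ Real.sqrt (2 * n) ≤ (k : ℝ) :=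
  stmt5_general hd v hext halg A b hne hbd hproj
end

section
/- Let T be an entrywise nonnegative m×r real matrix and U an entrywise nonnegative r×n real matrix (m, n, r ≥ 1), and suppose the pair T, U is normalized, meaning that for every ℓ ∈ [r] the maximum entry of the ℓ-th column of T equals the maximum entry of the ℓ-th row of U. Then max(‖T‖_∞, ‖U‖_∞) ≤ √(‖TU‖_∞), where ‖M‖_∞ denotes the maximum absolute value of an entry of the matrix M. -/
open Matrix

/-- If the pair of nonnegative matrices `T, U` is normalized (the maximum entry of the
`ℓ`-th column of `T` equals the maximum entry of the `ℓ`-th row of `U` for each `ℓ`),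
then `max(‖T‖_∞, ‖U‖_∞) ≤ √‖TU‖_∞`, where `‖·‖_∞` is the largest entry (all entries
involved being nonnegative). -/
theorem stmt8 {m n r : ℕ} (hm : 0 < m) (hn : 0 < n) (hr : 0 < r)
    (T : Matrix (Fin m) (Fin r) ℝ) (U : Matrix (Fin r) (Fin n) ℝ)
    (hT : ∀ i ℓ, 0 ≤ T i ℓ) (hU : ∀ ℓ j, 0 ≤ U ℓ j)
    (hnorm : ∀ ℓ, (⨆ i, T i ℓ) = ⨆ j, U ℓ j) :
    max (⨆ i, ⨆ ℓ, T i ℓ) (⨆ ℓ, ⨆ j, U ℓ j) ≤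
      Real.sqrt (⨆ i, ⨆ j, (T * U) i j) := by
  haveI : NeZero m := ⟨hm.ne'⟩
  haveI : NeZero n := ⟨hn.ne'⟩
  haveI : NeZero r := ⟨hr.ne'⟩
  set S : ℝ := ⨆ i, ⨆ j, (T * U) i j with hS
  have hbdd : ∀ {α : Type} [Fintype α] (f : α → ℝ), BddAbove (Set.range f) := by
    intro α _ f; exact (Set.finite_range f).bddAbove
  have hTnn : ∀ ℓ, (0:ℝ) ≤ ⨆ i, T i ℓ := fun ℓ =>
    le_trans (hT 0 ℓ) (le_ciSup (hbdd fun i => T i ℓ) 0)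
  -- key: for each ℓ, (⨆ i, T i ℓ) ≤ sqrt S
  have key : ∀ ℓ, (⨆ i, T i ℓ) ≤ Real.sqrt S := by
    intro ℓ
    obtain ⟨i₀, hi₀⟩ := Finite.exists_max (fun i => T i ℓ)
    obtain ⟨j₀, hj₀⟩ := Finite.exists_max (fun j => U ℓ j)
    have hTs : (⨆ i, T i ℓ) = T i₀ ℓ :=
      le_antisymm (ciSup_le hi₀) (le_ciSup (hbdd fun i => T i ℓ) i₀)
    have hUs : (⨆ j, U ℓ j) = U ℓ j₀ :=
      le_antisymm (ciSup_le hj₀) (le_ciSup (hbdd fun j => U ℓ j) j₀)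
    have hprod : T i₀ ℓ * U ℓ j₀ ≤ (T * U) i₀ j₀ := by
      rw [Matrix.mul_apply]
      exact Finset.single_le_sum
        (fun ℓ' _ => mul_nonneg (hT i₀ ℓ') (hU ℓ' j₀)) (Finset.mem_univ ℓ)
    have hle : (⨆ i, T i ℓ) * (⨆ i, T i ℓ) ≤ S := by
      calc (⨆ i, T i ℓ) * (⨆ i, T i ℓ)
          = T i₀ ℓ * U ℓ j₀ := by nth_rewrite 2 [hnorm ℓ]; rw [hTs, hUs]
        _ ≤ (T * U) i₀ j₀ := hprod
        _ ≤ ⨆ j, (T * U) i₀ j := le_ciSup (hbdd fun j => (T * U) i₀ j) j₀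
        _ ≤ S := le_ciSup (hbdd fun i => ⨆ j, (T * U) i j) i₀
    calc (⨆ i, T i ℓ) = Real.sqrt ((⨆ i, T i ℓ) * (⨆ i, T i ℓ)) :=
          (Real.sqrt_mul_self (hTnn ℓ)).symm
      _ ≤ Real.sqrt S := Real.sqrt_le_sqrt hle
  refine max_le ?_ ?_
  · exact ciSup_le fun i => ciSup_le fun ℓ =>
      le_trans (le_ciSup (hbdd fun i => T i ℓ) i) (key ℓ)
  · exact ciSup_le fun ℓ => by rw [← hnorm ℓ]; exact key ℓ
end

section
/- Let d, N ≥ 2 and let V = {v_1, …, v_n} ⊆ ℤ^d be a nonempty set of points in convex position with ‖v_i‖_∞ ≤ N for all i. Let P := conv(V), X := P ∩ ℤ^d, and Δ := ((d+1)N)^d. Suppose there exist an integer m×d matrix A and integer vector b ∈ ℤ^m with ‖A‖_∞, ‖b‖_∞ ≤ Δ and {x ∈ ℝ^d : Ax ≤ b} = P, together with an entrywise nonnegative m×r matrix T and an entrywise nonnegative r×n matrix U satisfying (TU)_{ij} = b_i − A_i·v_j for all i, j. Then there exist an integer (d+r)×d matrix Ā, a (d+r)×r matrix T̄ all of whose entries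 are nonnegative integer multiples of 1/(4r(d+r)Δ), and an integer vector b̄ ∈ ℤ^{d+r}, with ‖Ā‖_∞, ‖b̄‖_∞, ‖T̄‖_∞ ≤ Δ, such that X = { x ∈ ℤ^d : ∃ y ∈ [0,Δ]^r with ‖Āx + T̄y − b̄‖_∞ ≤ 1/(4(d+r)) }. -/
open Matrix

/-
The slack matrix is bounded by `Δ²`, so rescaling each column of `T` by its maximum (and the
matching row of `U` inversely) gives an extension `A x + T y = b`, `y ∈ [0, Δ]^r`, of `P` with
`0 ≤ T ≤ Δ`. Take a nonsingular minor of `[A | T]` of maximal size `k ≤ d + r` and, keeping its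
columns, rows maximizing its absolute determinant: by Cramer's rule every row of `[A | T]` is a
combination of these rows with coefficients in `[-1, 1]`. Keep only these rows and round `T` down
to multiples of `1 / (4r(d + r)Δ)`. An integer point of `P` then satisfies the rounded system up to
`1 / (4(d + r))`; conversely, an approximate solution violates each original inequality by at most
`(d + r) · 2 / (4(d + r)) = 1/2`, hence not at all, because `A x` and `b` are integral.
-/

theorem Nat.mul_add_one_le_succ_mul_pow {d N : ℕ} (hd : d ≠ 0) (hN : 1 ≤ N) :
    d * N + 1 ≤ ((d + 1) * N) ^ d :=
  calc d * N + 1 ≤ (d + 1) * N := by nlinarith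
    _ ≤ ((d + 1) * N) ^ d := Nat.le_self_pow hd _

namespace Matrix

theorem vecMul_inv_apply {K n : Type*} [Field K] [Fintype n] [DecidableEq n] (B : Matrix n n K)
    (v : n → K) (j : n) : (v ᵥ* B⁻¹) j = (B.updateRow j v).det / B.det := by
  rw [← mulVec_transpose, transpose_nonsing_inv, inv_def, smul_mulVec, ← cramer_eq_adjugate_mulVec,
    Pi.smul_apply, cramer_transpose_apply, det_transpose, Ring.inverse_eq_inv', smul_eq_mul,
    div_eq_inv_mul]

theorem card_le_of_det_submatrix_ne_zero {R κ ι : Type*} [CommRing R] [Fintype ι]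
    (W : Matrix κ ι R) {k : ℕ} {ρ : Fin k → κ} {γ : Fin k → ι}
    (h : (W.submatrix ρ γ).det ≠ 0) : k ≤ Fintype.card ι := by
  by_contra! hlt
  obtain ⟨i, j, hij, hγ⟩ := Fintype.exists_ne_map_eq_of_card_lt γ (by simpa using hlt)
  exact h (det_zero_of_column_eq hij fun l => by simp [hγ])

theorem submatrix_id_mulVec {R l m n : Type*} [NonUnitalNonAssocSemiring R] [Fintype n]
    (M : Matrix m n R) (ρ : l → m) (v : n → R) : M.submatrix ρ id *ᵥ v = (M *ᵥ v) ∘ ρ :=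
  rfl

theorem mulVec_eq_mulVec_comp {R κ ι : Type*} [CommRing R] [Fintype ι] {n : ℕ}
    {W : Matrix κ ι R} {ρ : Fin n → κ} {C : Matrix κ (Fin n) R}
    (hW : W = C * W.submatrix ρ id) (z : ι → R) : W *ᵥ z = C *ᵥ ((W *ᵥ z) ∘ ρ) := by
  conv_lhs => rw [hW]
  rw [← mulVec_mulVec, submatrix_id_mulVec]

section OrderedField

variable {K : Type*} [Field K] [LinearOrder K] [IsStrictOrderedRing K]

theorem abs_dotProduct_le {ι : Type*} [Fintype ι] {u v : ι → K} {s t : K}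
    (hu : ∀ j, |u j| ≤ s) (hv : ∀ j, |v j| ≤ t) : |u ⬝ᵥ v| ≤ Fintype.card ι * (s * t) := by
  calc |u ⬝ᵥ v| ≤ ∑ j, |u j * v j| := Finset.abs_sum_le_sum_abs _ _
    _ ≤ ∑ _j : ι, s * t := Finset.sum_le_sum fun j _ => by
        rw [abs_mul]
        exact mul_le_mul (hu j) (hv j) (abs_nonneg _) ((abs_nonneg _).trans (hu j))
    _ = Fintype.card ι * (s * t) := by simp

theorem sub_dotProduct_le {ι : Type*} [Fintype ι] {a x : ι → K} {β s t : K}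
    (ha : ∀ l, |a l| ≤ s) (hβ : |β| ≤ s) (hx : ∀ l, |x l| ≤ t) :
    β - a ⬝ᵥ x ≤ s * (Fintype.card ι * t + 1) := by
  have := abs_dotProduct_le ha hx
  linarith [le_abs_self β, neg_abs_le (a ⬝ᵥ x)]

variable {κ ι : Type*}

/-- The coefficients `C a j` are given by Cramer's rule, hence bounded by `1` by maximality of
`|det (W.submatrix ρ γ)|`; entry `(a, p)` of `W = C * W.submatrix ρ id` is the vanishing of the
Schur complement of `W.submatrix ρ γ` in the `(k + 1)`-minor on rows `ρ, a` and columns `γ, p`. -/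
theorem exists_abs_le_one_eq_mul_submatrix_of_maximal_minor (W : Matrix κ ι K) {k : ℕ}
    (ρ : Fin k → κ) (γ : Fin k → ι) (hdet : (W.submatrix ρ γ).det ≠ 0)
    (hmax : ∀ ρ' : Fin k → κ, |(W.submatrix ρ' γ).det| ≤ |(W.submatrix ρ γ).det|)
    (hrank : ∀ (ρ' : Fin (k + 1) → κ) (γ' : Fin (k + 1) → ι), (W.submatrix ρ' γ').det = 0) :
    ∃ C : Matrix κ (Fin k) K, (∀ a j, |C a j| ≤ 1) ∧ W = C * W.submatrix ρ id := by
  set B := W.submatrix ρ γ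
  refine ⟨W.submatrix id γ * B⁻¹, fun a j => ?_, ?_⟩
  · have hrow : B.updateRow j (fun l => W a (γ l)) = W.submatrix (Function.update ρ j a) γ := by
      ext i l
      by_cases h : i = j <;> simp [h, B, updateRow_apply]
    change |((fun l => W a (γ l)) ᵥ* B⁻¹) j| ≤ 1
    rw [vecMul_inv_apply, hrow, abs_div, div_le_one (abs_pos.2 hdet)]
    exact hmax _
  · ext a p
    have : Invertible B := invertibleOfIsUnitDet B (isUnit_iff_ne_zero.2 hdet)
    let ρ' : Fin k ⊕ Fin 1 → κ := Sum.elim ρ fun _ => a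
    let γ' : Fin k ⊕ Fin 1 → ι := Sum.elim γ fun _ => p
    have hblocks : W.submatrix ρ' γ' = fromBlocks B (W.submatrix ρ fun _ => p)
        (W.submatrix (fun _ => a) γ) (W.submatrix (fun _ => a) fun _ => p) := by
      ext (i | i) (j | j) <;> rfl
    have hzero := hrank (ρ' ∘ finSumFinEquiv.symm) (γ' ∘ finSumFinEquiv.symm)
    rw [← submatrix_submatrix, det_submatrix_equiv_self, hblocks, det_fromBlocks₁₁,
      det_fin_one] at hzero
    simpa [mul_apply, sub_eq_zero] using (mul_eq_zero.1 hzero).resolve_left hdet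

variable [Fintype κ] [Fintype ι]

theorem exists_abs_le_one_eq_mul_submatrix (W : Matrix κ ι K) :
    ∃ k ≤ Fintype.card ι, ∃ (ρ : Fin k → κ) (C : Matrix κ (Fin k) K),
      (∀ a j, |C a j| ≤ 1) ∧ W = C * W.submatrix ρ id := by
  let P k := ∃ (ρ : Fin k → κ) (γ : Fin k → ι), (W.submatrix ρ γ).det ≠ 0
  have hP0 : P 0 := ⟨Fin.elim0, Fin.elim0, by simp⟩
  set k := Nat.findGreatest P (Fintype.card ι)
  obtain ⟨ρ₀, γ, hdet₀⟩ : P k := Nat.findGreatest_spec (Nat.zero_le _) hP0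
  have : Nonempty (Fin k → κ) := ⟨ρ₀⟩
  obtain ⟨ρ, hρ⟩ := Finite.exists_max fun ρ : Fin k → κ => |(W.submatrix ρ γ).det|
  have hdet : (W.submatrix ρ γ).det ≠ 0 :=
    abs_pos.1 ((abs_pos.2 hdet₀).trans_le (hρ ρ₀))
  have hrank (ρ' : Fin (k + 1) → κ) (γ' : Fin (k + 1) → ι) : (W.submatrix ρ' γ').det = 0 := by
    by_contra h
    exact Nat.findGreatest_is_greatest (Nat.lt_succ_self k)
      (card_le_of_det_submatrix_ne_zero W h) ⟨ρ', γ', h⟩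
  exact ⟨k, Nat.findGreatest_le _, ρ,
    exists_abs_le_one_eq_mul_submatrix_of_maximal_minor W ρ γ hdet hρ hrank⟩

theorem exists_abs_le_one_eq_mul_submatrix_of_card_le [Nonempty κ] (W : Matrix κ ι K) {n : ℕ}
    (hn : Fintype.card ι ≤ n) :
    ∃ (ρ : Fin n → κ) (C : Matrix κ (Fin n) K),
      (∀ a j, |C a j| ≤ 1) ∧ W = C * W.submatrix ρ id := by
  obtain ⟨k, hk, ρ, C, hC, hW⟩ := W.exists_abs_le_one_eq_mul_submatrix
  obtain ⟨l, rfl⟩ := Nat.exists_eq_add_of_le (hk.trans hn)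
  refine ⟨Fin.append ρ fun _ => Classical.arbitrary κ, of fun a => Fin.append (C a) 0,
    fun a j => Fin.addCases (fun j => by simpa using hC a j) (fun j => by simp) j, ?_⟩
  ext a p
  nth_rewrite 1 [hW]
  simp [mul_apply, Fin.sum_univ_add]

end OrderedField

section Rounding

variable {κ σ : Type*}

noncomputable def roundDown (D : ℝ) (M : Matrix κ σ ℝ) : Matrix κ σ ℝ :=
  of fun i j => ⌊M i j * D⌋₊ / D

variable {D : ℝ} {M : Matrix κ σ ℝ}

theorem roundDown_apply_le (hD : 0 ≤ D) {i : κ} {j : σ} (hM : 0 ≤ M i j) :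
    roundDown D M i j ≤ M i j :=
  div_le_of_le_mul₀ hD hM (Nat.floor_le (mul_nonneg hM hD))

theorem abs_roundDown_apply_sub_le (hD : 0 < D) {i : κ} {j : σ} (hM : 0 ≤ M i j) :
    |roundDown D M i j - M i j| ≤ D⁻¹ := by
  have hlt : M i j * D < ⌊M i j * D⌋₊ + 1 := Nat.lt_floor_add_one _
  rw [abs_sub_comm, abs_of_nonneg (sub_nonneg.2 (roundDown_apply_le hD.le hM))]
  simp only [roundDown, of_apply]
  rw [sub_le_iff_le_add, inv_eq_one_div, ← add_div, le_div_iff₀ hD]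
  linarith

theorem abs_roundDown_sub_mulVec_apply_le [Fintype σ] {c t : ℝ} (hc : 0 < c) (ht : 0 < t)
    (hD : D = Fintype.card σ * c * t) (hM : ∀ i j, 0 ≤ M i j) {y : σ → ℝ}
    (hy : ∀ j, |y j| ≤ t) (i : κ) : |((roundDown D M - M) *ᵥ y) i| ≤ 1 / c := by
  rcases isEmpty_or_nonempty σ with hσ | hσ
  · simp [mulVec, dotProduct, hc.le]
  have hDpos : 0 < D := by rw [hD]; positivity
  refine (abs_dotProduct_le (fun j => abs_roundDown_apply_sub_le hDpos (hM i j)) hy).trans_eq ?_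
  rw [hD]
  field_simp

end Rounding

theorem intCast_sub_mulVec_le {κ ι η : Type*} [Fintype ι] {A : Matrix κ ι ℤ} {b : κ → ℤ}
    {v : η → ι → ℤ} {N Δ : ℕ} (hΔ : Fintype.card ι * N + 1 ≤ Δ) (hA : ∀ a l, |A a l| ≤ Δ)
    (hb : ∀ a, |b a| ≤ Δ) (hv : ∀ j l, |v j l| ≤ N) (a : κ) (j : η) :
    (b a : ℝ) - (A.map (Int.cast : ℤ → ℝ) *ᵥ fun l => (v j l : ℝ)) a ≤ Δ * Δ := by
  refine (sub_dotProduct_le (t := (N : ℝ)) (fun l => ?_) ?_ fun l => ?_).trans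
    (mul_le_mul_of_nonneg_left (by exact_mod_cast hΔ) (Nat.cast_nonneg _))
  · rw [map_apply]
    exact_mod_cast hA a l
  · exact_mod_cast hb a
  · exact_mod_cast hv j l

theorem exists_mem_Icc_mul_eq_of_mul_le {κ σ η : Type*} [Finite κ] [Fintype σ]
    {T : Matrix κ σ ℝ} {U : Matrix σ η ℝ} (hT : ∀ a ℓ, 0 ≤ T a ℓ) (hU : ∀ ℓ j, 0 ≤ U ℓ j)
    {α β : ℝ} (hα : 0 < α) (hβ : 0 ≤ β) (hTU : ∀ a j, (T * U) a j ≤ α * β) :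
    ∃ (T' : Matrix κ σ ℝ) (U' : Matrix σ η ℝ), (∀ a ℓ, T' a ℓ ∈ Set.Icc 0 α) ∧
      (∀ ℓ j, U' ℓ j ∈ Set.Icc 0 β) ∧ T' * U' = T * U := by
  set μ := fun ℓ => ⨆ a, T a ℓ
  have hle (a : κ) (ℓ : σ) : T a ℓ ≤ μ ℓ := le_ciSup (Finite.bddAbove_range fun a => T a ℓ) a
  have hμ (ℓ : σ) : 0 ≤ μ ℓ := Real.iSup_nonneg fun a => hT a ℓ
  have hμU (ℓ : σ) (j : η) : μ ℓ * U ℓ j ≤ α * β := by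
    rcases isEmpty_or_nonempty κ with hκ | hκ
    · simp [μ, Real.iSup_of_isEmpty, mul_nonneg hα.le hβ]
    obtain ⟨a, ha⟩ := exists_eq_ciSup_of_finite (f := fun a => T a ℓ)
    calc μ ℓ * U ℓ j = T a ℓ * U ℓ j := by rw [ha]
      _ ≤ (T * U) a j :=
        Finset.single_le_sum (fun ℓ _ => mul_nonneg (hT a ℓ) (hU ℓ j)) (Finset.mem_univ ℓ)
      _ ≤ α * β := hTU a j
  refine ⟨of fun a ℓ => T a ℓ / μ ℓ * α, of fun ℓ j => μ ℓ * U ℓ j / α,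
    fun a ℓ => ⟨?_, ?_⟩, fun ℓ j => ⟨?_, ?_⟩, ?_⟩
  · exact mul_nonneg (div_nonneg (hT a ℓ) (hμ ℓ)) hα.le
  · exact mul_le_of_le_one_left hα.le (div_le_one_of_le₀ (hle a ℓ) (hμ ℓ))
  · exact div_nonneg (mul_nonneg (hμ ℓ) (hU ℓ j)) hα.le
  · exact div_le_of_le_mul₀ hα.le hβ ((hμU ℓ j).trans_eq (mul_comm α β))
  · ext a j
    simp only [mul_apply, of_apply]
    refine Finset.sum_congr rfl fun ℓ _ => ?_
    -- if `μ ℓ = 0`, column `ℓ` of `T` vanishes, and so does that of `T'` since `x / 0 = 0`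
    rcases eq_or_ne (μ ℓ) 0 with h | h
    · simp [le_antisymm (h ▸ hle a ℓ) (hT a ℓ), h]
    · field_simp

theorem exists_mulVec_add_mulVec_eq_of_mem_convexHull {κ ι σ η : Type*} [Fintype ι]
    [Fintype σ] (A : Matrix κ ι ℝ) (T : Matrix κ σ ℝ) (b : κ → ℝ) {Y : Set (σ → ℝ)}
    (hY : Convex ℝ Y) (v : η → ι → ℝ) (w : η → σ → ℝ) (hw : ∀ j, w j ∈ Y)
    (hvw : ∀ j, A *ᵥ v j + T *ᵥ w j = b) {x : ι → ℝ} (hx : x ∈ convexHull ℝ (Set.range v)) :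
    ∃ y ∈ Y, A *ᵥ x + T *ᵥ y = b := by
  refine convexHull_min (t := {x | ∃ y ∈ Y, A *ᵥ x + T *ᵥ y = b})
    (Set.range_subset_iff.2 fun j => ⟨w j, hw j, hvw j⟩) ?_ hx
  rintro x₁ ⟨y₁, hy₁, h₁⟩ x₂ ⟨y₂, hy₂, h₂⟩ s t hs ht hst
  refine ⟨s • y₁ + t • y₂, hY hy₁ hy₂ hs ht hst, ?_⟩
  rw [mulVec_add, mulVec_add, mulVec_smul, mulVec_smul, mulVec_smul, mulVec_smul,
    add_add_add_comm, ← smul_add, ← smul_add, h₁, h₂, ← add_smul, hst, one_smul]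

theorem exists_extension_of_slack_le {κ ι σ η : Type*} [Finite κ] [Fintype ι] [Fintype σ]
    (A : Matrix κ ι ℝ) (b : κ → ℝ) (v : η → ι → ℝ) {T : Matrix κ σ ℝ} {U : Matrix σ η ℝ}
    (hT : ∀ a ℓ, 0 ≤ T a ℓ) (hU : ∀ ℓ j, 0 ≤ U ℓ j)
    (hfac : ∀ a j, (T * U) a j = b a - (A *ᵥ v j) a) {α β : ℝ} (hα : 0 < α) (hβ : 0 ≤ β)
    (hslack : ∀ a j, b a - (A *ᵥ v j) a ≤ α * β) :
    ∃ T' : Matrix κ σ ℝ, (∀ a ℓ, T' a ℓ ∈ Set.Icc 0 α) ∧ ∀ x ∈ convexHull ℝ (Set.range v),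
      ∃ y : σ → ℝ, (∀ ℓ, y ℓ ∈ Set.Icc 0 β) ∧ A *ᵥ x + T' *ᵥ y = b := by
  obtain ⟨T', U', hT', hU', hTU⟩ :=
    exists_mem_Icc_mul_eq_of_mul_le hT hU hα hβ fun a j => (hfac a j).trans_le (hslack a j)
  refine ⟨T', hT', fun x hx => exists_mulVec_add_mulVec_eq_of_mem_convexHull A T' b
    (Y := {y | ∀ ℓ, y ℓ ∈ Set.Icc 0 β})
    (fun y₁ h₁ y₂ h₂ s t hs ht hst ℓ => convex_Icc 0 β (h₁ ℓ) (h₂ ℓ) hs ht hst)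
    v (fun j ℓ => U' ℓ j) (fun j ℓ => hU' ℓ j) (fun j => ?_) hx⟩
  ext a
  have h := hTU ▸ hfac a j
  change (A *ᵥ v j) a + (T' * U') a j = b a
  linarith

theorem nonempty_of_setOf_mulVec_le_eq_convexHull {κ ι η : Type*} [Fintype ι] [Nonempty ι]
    [Finite η] {A : Matrix κ ι ℝ} {b : κ → ℝ} {v : η → ι → ℝ}
    (h : {x | ∀ a, (A *ᵥ x) a ≤ b a} = convexHull ℝ (Set.range v)) : Nonempty κ := by
  by_contra hκ
  rw [not_nonempty_iff] at hκ
  have huniv : {x : ι → ℝ | ∀ a, (A *ᵥ x) a ≤ b a} = Set.univ :=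
    Set.eq_univ_of_forall fun x a => isEmptyElim a
  exact NormedSpace.unbounded_univ ℝ (ι → ℝ)
    (huniv ▸ h ▸ isBounded_convexHull.2 (Set.finite_range v).isBounded)

theorem intCast_mulVec_le_of_abs_residual_le {κ ι σ : Type*} [Fintype ι] [Fintype σ]
    {n : ℕ} (A : Matrix κ ι ℤ) (b : κ → ℤ) (T : Matrix κ σ ℝ) (hT : ∀ a ℓ, 0 ≤ T a ℓ)
    {ρ : Fin n → κ} {C : Matrix κ (Fin n) ℝ} (hC : ∀ a j, |C a j| ≤ 1)
    (hW : fromCols (A.map (Int.cast : ℤ → ℝ)) T =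
      C * (fromCols (A.map (Int.cast : ℤ → ℝ)) T).submatrix ρ id)
    {x₀ : ι → ℝ} {y₀ : σ → ℝ} (h₀ : A.map (Int.cast : ℤ → ℝ) *ᵥ x₀ + T *ᵥ y₀ = Int.cast ∘ b)
    {x : ι → ℤ} {y : σ → ℝ} (hy : ∀ ℓ, 0 ≤ y ℓ) {δ : ℝ} (hδ : n * δ < 1)
    (hres : ∀ j, |(A.map (Int.cast : ℤ → ℝ) *ᵥ (Int.cast ∘ x) + T *ᵥ y - Int.cast ∘ b :
      κ → ℝ) (ρ j)| ≤ δ) (a : κ) :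
    (A.map (Int.cast : ℤ → ℝ) *ᵥ (Int.cast ∘ x)) a ≤ b a := by
  set r := A.map (Int.cast : ℤ → ℝ) *ᵥ (Int.cast ∘ x) + T *ᵥ y - Int.cast ∘ b
  have hr : r = fromCols (A.map (Int.cast : ℤ → ℝ)) T *ᵥ
      (Sum.elim (Int.cast ∘ x) y - Sum.elim x₀ y₀) := by
    rw [mulVec_sub, fromCols_mulVec_sumElim, fromCols_mulVec_sumElim, h₀]
  have hra : |r a| ≤ n * δ := by
    rw [hr, mulVec_eq_mulVec_comp hW, ← hr]
    refine (abs_dotProduct_le (hC a) hres).trans_eq ?_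
    simp
  have hTy : 0 ≤ (T *ᵥ y) a := Finset.sum_nonneg fun ℓ _ => mul_nonneg (hT a ℓ) (hy ℓ)
  have hlt : (A.map (Int.cast : ℤ → ℝ) *ᵥ (Int.cast ∘ x)) a < b a + 1 := by
    have := (abs_le.1 hra).2
    simp only [r, Pi.add_apply, Pi.sub_apply, Function.comp_apply] at this
    linarith
  have hcast : ((A *ᵥ x) a : ℝ) = (A.map (Int.cast : ℤ → ℝ) *ᵥ Int.cast ∘ x) a :=
    RingHom.map_mulVec (Int.castRingHom ℝ) A x a
  rw [← hcast] at hlt ⊢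
  exact_mod_cast Int.lt_add_one_iff.1 (by exact_mod_cast hlt)

theorem setOf_intCast_mulVec_le_eq_approx {κ ι σ : Type*} [Fintype ι] [Fintype σ] {n : ℕ}
    (A : Matrix κ ι ℤ) (b : κ → ℤ) (T : Matrix κ σ ℝ) (hT : ∀ a ℓ, 0 ≤ T a ℓ)
    {Y : Set (σ → ℝ)} (hY : ∀ y ∈ Y, ∀ ℓ, 0 ≤ y ℓ)
    (hext : ∀ x, (∀ a, (A.map (Int.cast : ℤ → ℝ) *ᵥ x) a ≤ b a) →
      ∃ y ∈ Y, A.map (Int.cast : ℤ → ℝ) *ᵥ x + T *ᵥ y = Int.cast ∘ b)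
    {x₀ : ι → ℝ} (hx₀ : ∀ a, (A.map (Int.cast : ℤ → ℝ) *ᵥ x₀) a ≤ b a)
    {ρ : Fin n → κ} {C : Matrix κ (Fin n) ℝ} (hC : ∀ a j, |C a j| ≤ 1)
    (hW : fromCols (A.map (Int.cast : ℤ → ℝ)) T =
      C * (fromCols (A.map (Int.cast : ℤ → ℝ)) T).submatrix ρ id)
    {Tb : Matrix (Fin n) σ ℝ} {ε : ℝ} (hε : 2 * n * ε < 1)
    (hTb : ∀ y ∈ Y, ∀ i, |((Tb - T.submatrix ρ id) *ᵥ y) i| ≤ ε) :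
    {x : ι → ℤ | ∀ a, (A.map (Int.cast : ℤ → ℝ) *ᵥ (Int.cast ∘ x)) a ≤ b a} =
      {x | ∃ y ∈ Y, ∀ i, |((A.submatrix ρ id).map (Int.cast : ℤ → ℝ) *ᵥ (Int.cast ∘ x) +
        Tb *ᵥ y - Int.cast ∘ (b ∘ ρ) : Fin n → ℝ) i| ≤ ε} := by
  have key (x : ι → ℤ) (y : σ → ℝ) (i : Fin n) :
      ((A.submatrix ρ id).map (Int.cast : ℤ → ℝ) *ᵥ (Int.cast ∘ x) + Tb *ᵥ y -
        Int.cast ∘ (b ∘ ρ) : Fin n → ℝ) i =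
      (A.map (Int.cast : ℤ → ℝ) *ᵥ (Int.cast ∘ x) + T *ᵥ y - Int.cast ∘ b : κ → ℝ) (ρ i) +
        ((Tb - T.submatrix ρ id) *ᵥ y) i := by
    simp only [Pi.add_apply, Pi.sub_apply, sub_mulVec, ← submatrix_map, submatrix_id_mulVec,
      Function.comp_apply]
    ring
  obtain ⟨y₀, -, h₀⟩ := hext x₀ hx₀
  ext x
  constructor
  · intro hx
    obtain ⟨y, hy, hxy⟩ := hext _ hx
    refine ⟨y, hy, fun i => ?_⟩
    rw [key, hxy, sub_self, Pi.zero_apply, zero_add]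
    exact hTb y hy i
  · rintro ⟨y, hy, happrox⟩
    refine intCast_mulVec_le_of_abs_residual_le A b T hT hC hW h₀ (hY y hy) (δ := 2 * ε)
      (by linarith) fun j => ?_
    rw [eq_sub_of_add_eq (key x y j).symm, two_mul]
    exact (abs_sub _ _).trans (add_le_add (happrox j) (hTb y hy j))

end Matrix

theorem stmt9_general {d N n m r : ℕ} (hd : 2 ≤ d) (hN : 2 ≤ N) (hn : 1 ≤ n)
    (v : Fin n → (Fin d → ℤ))
    (hbound : ∀ i j, |v i j| ≤ (N : ℤ))
    (A : Matrix (Fin m) (Fin d) ℤ) (b : Fin m → ℤ)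
    (hA : ∀ i j, |A i j| ≤ (((d + 1) * N) ^ d : ℤ))
    (hb : ∀ i, |b i| ≤ (((d + 1) * N) ^ d : ℤ))
    (hP : {x : Fin d → ℝ | ∀ i, (A.map (Int.cast : ℤ → ℝ)).mulVec x i ≤ (b i : ℝ)}
        = convexHull ℝ (Set.range fun i' (j : Fin d) => ((v i' j : ℝ))))
    (T : Matrix (Fin m) (Fin r) ℝ) (U : Matrix (Fin r) (Fin n) ℝ)
    (hT : ∀ i ℓ, 0 ≤ T i ℓ) (hU : ∀ ℓ j, 0 ≤ U ℓ j)
    (hfac : ∀ i j, (T * U) i j = (b i : ℝ) - ∑ l, (A i l : ℝ) * (v j l : ℝ)) :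
    ∃ (Ab : Matrix (Fin (d + r)) (Fin d) ℤ) (Tb : Matrix (Fin (d + r)) (Fin r) ℝ)
      (bb : Fin (d + r) → ℤ),
      (∀ i j, ∃ c : ℕ, Tb i j =
        (c : ℝ) / ((4 * r * (d + r) : ℕ) * ((((d + 1) * N) ^ d : ℕ) : ℝ))) ∧
      (∀ i j, |Ab i j| ≤ (((d + 1) * N) ^ d : ℤ)) ∧
      (∀ i, |bb i| ≤ (((d + 1) * N) ^ d : ℤ)) ∧
      (∀ i j, Tb i j ≤ ((((d + 1) * N) ^ d : ℕ) : ℝ)) ∧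
      {x : Fin d → ℤ | (fun j => ((x j : ℝ))) ∈
          convexHull ℝ (Set.range fun i' (j : Fin d) => ((v i' j : ℝ)))}
        = {x : Fin d → ℤ | ∃ y : Fin r → ℝ,
            (∀ j, y j ∈ Set.Icc (0 : ℝ) ((((d + 1) * N) ^ d : ℕ) : ℝ)) ∧
            ∀ i, |∑ l, (Ab i l : ℝ) * (x l : ℝ) + Tb.mulVec y i - (bb i : ℝ)| ≤
              1 / ((4 * (d + r) : ℕ) : ℝ)} := by
  set Δ : ℕ := ((d + 1) * N) ^ d with hΔ
  have hΔℤ : (((d + 1) * N) ^ d : ℤ) = Δ := by simp [hΔ]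
  have hΔpos : (0 : ℝ) < Δ := by positivity
  have hslack := intCast_sub_mulVec_le
    (by simpa using Nat.mul_add_one_le_succ_mul_pow (by omega : d ≠ 0) (by omega : 1 ≤ N))
    (fun a l => (hA a l).trans_eq hΔℤ) (fun a => (hb a).trans_eq hΔℤ) hbound
  obtain ⟨T', hT', hext⟩ := (A.map (Int.cast : ℤ → ℝ)).exists_extension_of_slack_le
    (fun a => (b a : ℝ)) (fun j l => (v j l : ℝ)) hT hU hfac hΔpos hΔpos.le hslack
  have : Nonempty (Fin d) := ⟨⟨0, by omega⟩⟩
  have : Nonempty (Fin m) := nonempty_of_setOf_mulVec_le_eq_convexHull hP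
  obtain ⟨ρ, C, hC, hW⟩ := exists_abs_le_one_eq_mul_submatrix_of_card_le
    (fromCols (A.map (Int.cast : ℤ → ℝ)) T') (n := d + r) (by simp)
  refine ⟨A.submatrix ρ id, roundDown ((4 * r * (d + r) : ℕ) * Δ) (T'.submatrix ρ id), b ∘ ρ,
    fun i j => ⟨_, rfl⟩, fun i l => hA _ _, fun i => hb _,
    fun i ℓ => (roundDown_apply_le (by positivity) (hT' _ _).1).trans (hT' _ _).2, ?_⟩
  rw [← hP] at hext ⊢
  exact setOf_intCast_mulVec_le_eq_approx A b T' (fun a ℓ => (hT' a ℓ).1) (fun y hy ℓ => (hy ℓ).1)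
    hext ((Set.ext_iff.1 hP _).2 (subset_convexHull ℝ _ ⟨⟨0, hn⟩, rfl⟩)) hC hW
    (by push_cast; field_simp; linarith)
    (fun y hy i => abs_roundDown_sub_mulVec_apply_le (M := T'.submatrix ρ id)
      (c := ((4 * (d + r) : ℕ) : ℝ)) (by positivity) hΔpos (by push_cast [Fintype.card_fin]; ring)
      (fun a ℓ => (hT' _ _).1) (fun ℓ => abs_le.2 ⟨by linarith [(hy ℓ).1], (hy ℓ).2⟩) i)

/-- Rounding lemma: given a convex independent set `V ⊆ ℤ^d` with `‖v_i‖_∞ ≤ N`,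
`P = conv(V) = {x : Ax ≤ b}` with integral `A, b` bounded by `Δ := ((d+1)N)^d`, and a
rank-`r` nonnegative factorization `TU` of the slack matrix, there is a rounded system
`(Ā, T̄, b̄)` with `Ā, b̄` integral, the entries of `T̄` nonnegative integer multiples of
`1/(4r(d+r)Δ)`, all entries bounded by `Δ`, such that an integer point `x` lies in `P`
iff `∃ y ∈ [0,Δ]^r` with `‖Āx + T̄y − b̄‖_∞ ≤ 1/(4(d+r))`. -/
theorem stmt9 {d N n m r : ℕ} (hd : 2 ≤ d) (hN : 2 ≤ N) (hn : 1 ≤ n)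
    (v : Fin n → (Fin d → ℤ))
    (hconv : ∀ i, (fun j => ((v i j : ℝ))) ∈
      Set.extremePoints ℝ (convexHull ℝ (Set.range fun i' (j : Fin d) => ((v i' j : ℝ)))))
    (hbound : ∀ i j, |v i j| ≤ (N : ℤ))
    (A : Matrix (Fin m) (Fin d) ℤ) (b : Fin m → ℤ)
    (hA : ∀ i j, |A i j| ≤ (((d + 1) * N) ^ d : ℤ))
    (hb : ∀ i, |b i| ≤ (((d + 1) * N) ^ d : ℤ))
    (hP : {x : Fin d → ℝ | ∀ i, (A.map (Int.cast : ℤ → ℝ)).mulVec x i ≤ (b i : ℝ)}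
        = convexHull ℝ (Set.range fun i' (j : Fin d) => ((v i' j : ℝ))))
    (T : Matrix (Fin m) (Fin r) ℝ) (U : Matrix (Fin r) (Fin n) ℝ)
    (hT : ∀ i ℓ, 0 ≤ T i ℓ) (hU : ∀ ℓ j, 0 ≤ U ℓ j)
    (hfac : ∀ i j, (T * U) i j = (b i : ℝ) - ∑ l, (A i l : ℝ) * (v j l : ℝ)) :
    ∃ (Ab : Matrix (Fin (d + r)) (Fin d) ℤ) (Tb : Matrix (Fin (d + r)) (Fin r) ℝ)
      (bb : Fin (d + r) → ℤ),
      (∀ i j, ∃ c : ℕ, Tb i j =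
        (c : ℝ) / ((4 * r * (d + r) : ℕ) * ((((d + 1) * N) ^ d : ℕ) : ℝ))) ∧
      (∀ i j, |Ab i j| ≤ (((d + 1) * N) ^ d : ℤ)) ∧
      (∀ i, |bb i| ≤ (((d + 1) * N) ^ d : ℤ)) ∧
      (∀ i j, Tb i j ≤ ((((d + 1) * N) ^ d : ℕ) : ℝ)) ∧
      {x : Fin d → ℤ | (fun j => ((x j : ℝ))) ∈
          convexHull ℝ (Set.range fun i' (j : Fin d) => ((v i' j : ℝ)))}
        = {x : Fin d → ℤ | ∃ y : Fin r → ℝ,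
            (∀ j, y j ∈ Set.Icc (0 : ℝ) ((((d + 1) * N) ^ d : ℕ) : ℝ)) ∧
            ∀ i, |∑ l, (Ab i l : ℝ) * (x l : ℝ) + Tb.mulVec y i - (bb i : ℝ)| ≤
              1 / ((4 * (d + r) : ℕ) : ℝ)} :=
  stmt9_general hd hN hn v hbound A b hA hb hP T U hT hU hfac
end

section
/- Let w_1, …, w_m ∈ ℝ^N span a linear subspace W of dimension k, and let I ⊆ [m] with |I| = k be a subset maximizing the k-dimensional volume vol({w_i : i ∈ I}) (the square root of the Gram determinant det(⟨w_i, w_j⟩)_{i,j∈I}) among all k-element subsets, and suppose this maximal volume is strictly positive. Then {w_i : i ∈ I} is a basis of W, and for every ℓ ∈ [m], the unique coefficients λ ∈ ℝ^I with w_ℓ = ∑_{i∈I} λ_i w_i satisfy |λ_i| ≤ 1 for all i ∈ I. -/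
/-!
Replacing `w i₀` (for `i₀ ∈ I`) by `w ℓ = ∑ λ_i w_i` is an elementary row operation on the
matrix with rows `w_i`, of determinant `λ_{i₀}`, so it multiplies the Gram determinant by
`λ_{i₀}²`. The new family is either the family of another `k`-subset or has a repeated vector
(Gram determinant `0`); in both cases maximality of `I` gives `λ_{i₀}² ≤ 1`.
A positive Gram determinant makes `{w_i : i ∈ I}` linearly independent, hence a basis of the
`k`-dimensional span.
-/

open Matrix

theorem of_dotProduct_eq_mul_transpose {ι n R : Type*} [Fintype n] [CommSemiring R]
    (v : ι → n → R) : (of fun i j => v i ⬝ᵥ v j) = of v * (of v)ᵀ := rfl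

section Gram

variable {ι n R : Type*} [Fintype ι] [DecidableEq ι] [Fintype n]

theorem det_of_dotProduct_update_sum [CommRing R] (v : ι → n → R) (i₀ : ι) (c : ι → R) :
    (of fun i j => Function.update v i₀ (∑ k, c k • v k) i ⬝ᵥ
        Function.update v i₀ (∑ k, c k • v k) j).det =
      c i₀ ^ 2 * (of fun i j => v i ⬝ᵥ v j).det := by
  set E : Matrix ι ι R := (1 : Matrix ι ι R).updateRow i₀ c
  have hE : of (Function.update v i₀ (∑ k, c k • v k)) = E * of v := by
    rw [updateRow_mul, Matrix.one_mul, vecMul_eq_sum]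
    rfl
  have hdetE : E.det = c i₀ := by
    have := det_updateRow_sum (1 : Matrix ι ι R) i₀ c
    rwa [← vecMul_eq_sum, vecMul_one, det_one, smul_eq_mul, mul_one] at this
  rw [of_dotProduct_eq_mul_transpose, of_dotProduct_eq_mul_transpose, hE, transpose_mul,
    Matrix.mul_assoc, ← Matrix.mul_assoc (of v), det_mul, det_mul, det_transpose, hdetE]
  ring

theorem linearIndependent_of_det_of_dotProduct_ne_zero [CommRing R] [IsDomain R]
    (v : ι → n → R) (h : (of fun i j => v i ⬝ᵥ v j).det ≠ 0) : LinearIndependent R v :=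
  LinearIndependent.of_comp (vecMulLinear (of v)ᵀ) (linearIndependent_rows_of_det_ne_zero h)

theorem abs_le_one_of_det_of_dotProduct_update_sum_le [CommRing R] [LinearOrder R]
    [IsStrictOrderedRing R] (v : ι → n → R) (c : ι → R) (i₀ : ι)
    (hpos : 0 < (of fun i j => v i ⬝ᵥ v j).det)
    (hle : (of fun i j => Function.update v i₀ (∑ k, c k • v k) i ⬝ᵥ
        Function.update v i₀ (∑ k, c k • v k) j).det ≤ (of fun i j => v i ⬝ᵥ v j).det) :
    |c i₀| ≤ 1 := by
  rw [det_of_dotProduct_update_sum] at hle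
  rw [← sq_le_one_iff_abs_le_one]
  exact (mul_le_iff_le_one_left hpos).mp hle

theorem det_of_dotProduct_comp_le_of_forall_finset {α : Type*} [DecidableEq α] [CommRing R]
    [PartialOrder R] (w : α → n → R) {k : ℕ} {M : R} (hM : 0 ≤ M)
    (hmax : ∀ J : Finset α, J.card = k → (of fun i j : J => w i ⬝ᵥ w j).det ≤ M)
    (σ : ι → α) (hσk : Fintype.card ι = k) :
    (of fun i j => (w ∘ σ) i ⬝ᵥ (w ∘ σ) j).det ≤ M := by
  by_cases hσ : σ.Injective
  · set J := Finset.univ.map ⟨σ, hσ⟩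
    let e : ι ≃ J := (Equiv.ofInjective σ hσ).trans (Equiv.subtypeEquivRight (by simp [J]))
    have hJ : J.card = k := by simp [J, hσk]
    calc (of fun i j => (w ∘ σ) i ⬝ᵥ (w ∘ σ) j).det
        = ((of fun i j : J => w i ⬝ᵥ w j).submatrix e e).det := rfl
      _ ≤ M := by rw [det_submatrix_equiv_self]; exact hmax J hJ
  · obtain ⟨i, j, hij, hne⟩ : ∃ i j, σ i = σ j ∧ i ≠ j := by
      simpa [Function.Injective] using hσ
    rw [det_zero_of_row_eq hne (by ext; simp [hij])]
    exact hM

end Gram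

theorem span_image_eq_span_range_of_linearIndependent {α K V : Type*} [Finite α] [DivisionRing K]
    [AddCommGroup V] [Module K V] (w : α → V) (I : Finset α)
    (hli : LinearIndependent K fun i : I => w i)
    (hrank : Module.finrank K (Submodule.span K (Set.range w)) = I.card) :
    Submodule.span K (w '' I) = Submodule.span K (Set.range w) :=
  have := FiniteDimensional.span_of_finite K (Set.finite_range w)
  Submodule.eq_of_le_of_finrank_eq (Submodule.span_mono (Set.image_subset_range _ _)) <| by
    rw [Set.image_eq_range]
    exact (finrank_span_eq_card hli).trans (Fintype.card_coe I ▸ hrank.symm)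

/-- If `I` is a `k`-subset of indices maximizing the `k`-dimensional volume (square root
of the Gram determinant) among `k`-subsets of `w_1, …, w_m`, where `k` is the dimension
of the span `W` of the `w`'s, and this maximal volume is positive, then `{w_i : i ∈ I}`
is a basis of `W` and the coefficients expressing any `w_ℓ` in this basis are at most `1`
in absolute value. -/
theorem stmt12 {m N k : ℕ} (w : Fin m → (Fin N → ℝ))
    (hk : Module.finrank ℝ (Submodule.span ℝ (Set.range w)) = k)
    (I : Finset (Fin m)) (hI : I.card = k)
    (hmax : ∀ J : Finset (Fin m), J.card = k →
      Real.sqrt (Matrix.det (Matrix.of fun i j : ↥J => w i ⬝ᵥ w j)) ≤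
        Real.sqrt (Matrix.det (Matrix.of fun i j : ↥I => w i ⬝ᵥ w j)))
    (hpos : 0 < Real.sqrt (Matrix.det (Matrix.of fun i j : ↥I => w i ⬝ᵥ w j))) :
    LinearIndependent ℝ (fun i : ↥I => w i) ∧
    Submodule.span ℝ (w '' ↑I) = Submodule.span ℝ (Set.range w) ∧
    ∀ (ℓ : Fin m) (lam : ↥I → ℝ), w ℓ = ∑ i, lam i • w i → ∀ i, |lam i| ≤ 1 := by
  have hG : 0 < (of fun i j : I => w i ⬝ᵥ w j).det := Real.sqrt_pos.mp hpos
  have hmax' (J : Finset (Fin m)) (hJ : J.card = k) :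
      (of fun i j : J => w i ⬝ᵥ w j).det ≤ (of fun i j : I => w i ⬝ᵥ w j).det :=
    (Real.sqrt_le_sqrt_iff hG.le).mp (hmax J hJ)
  have hli := linearIndependent_of_det_of_dotProduct_ne_zero (fun i : I => w i) hG.ne'
  refine ⟨hli, span_image_eq_span_range_of_linearIndependent w I hli (hk.trans hI.symm), ?_⟩
  intro ℓ lam hℓ i₀
  refine abs_le_one_of_det_of_dotProduct_update_sum_le _ lam i₀ hG ?_
  have hswap := det_of_dotProduct_comp_le_of_forall_finset w hG.le hmax'
    (Function.update (↑) i₀ ℓ) (by rw [Fintype.card_coe, hI])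
  rwa [Function.comp_update, hℓ] at hswap
end
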